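/- arXiv:1501.03594 — 4 statements merged into one kernel-verified Lean document; each statement's English description precedes it below -/
import Mathlib

section
/- One-step Lax–Oleinik identity for the Lax–Friedrichs scheme: Assume H satisfies (H1)–(H3) and let L be its Legendre transform. Fix x, t, c ∈ ℝ, λ > 0, Δx > 0, Δt := λΔx, and real numbers a, b (the values of the grid function at the two lower neighbors). Set P := c + (b − a)/(2Δx). If |H_p(x,t,P)| ≤ λ^{-1}, then min over ξ ∈ [−λ^{-1}, λ^{-1}] of [ (1/2 + (λ/2)ξ)·a + (1/2 − (λ/2)ξ)·b + Δt·(L(x,t,ξ) − cξ) ] = (a+b)/2 − Δt·H(x,t,P), and the minimum is attained at ξ = H_p(x,t,P) and at no other point of [−λ^{-1}, λ^{-1}]. -/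
/-- The Legendre transform `L(x,t,ξ) = sup_p (ξ p − H(x,t,p))`. -/
noncomputable def legendreL (H : ℝ → ℝ → ℝ → ℝ) (x t ξ : ℝ) : ℝ :=
  sSup (Set.range fun p => ξ * p - H x t p)

/-- One-step Lax–Oleinik identity for the Lax–Friedrichs scheme:
under the CFL condition `|H_p(x,t,P)| ≤ lam⁻¹` with `P = c + (b−a)/(2Δx)`, the
minimum of `ξ ↦ (1/2 + (lam/2)ξ)a + (1/2 − (lam/2)ξ)b + Δt (L(x,t,ξ) − cξ)`
over `ξ ∈ [−lam⁻¹, lam⁻¹]` equals `(a+b)/2 − Δt H(x,t,P)`, and is attained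
exactly at `ξ = H_p(x,t,P)`.  (Here `Δt = lam * Δx`.) -/
theorem statement3
    (H : ℝ → ℝ → ℝ → ℝ)
    (hH1 : ContDiff ℝ 2 (fun q : ℝ × ℝ × ℝ => H q.1 q.2.1 q.2.2))
    (hHper : ∀ x t p : ℝ, H (x + 1) t p = H x t p ∧ H x (t + 1) p = H x t p)
    (hH2 : ∀ x t p : ℝ, 0 < deriv (deriv (H x t)) p)
    (hH3 : ∀ M : ℝ, ∃ R : ℝ, ∀ x t p : ℝ, R ≤ |p| → M ≤ H x t p / |p|)
    (x t c lam Δx a b : ℝ) (hlam : 0 < lam) (hΔx : 0 < Δx)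
    (P : ℝ) (hP : P = c + (b - a) / (2 * Δx))
    (hCFL : |deriv (H x t) P| ≤ lam⁻¹)
    (F : ℝ → ℝ)
    (hF : ∀ ξ : ℝ, F ξ = (1 / 2 + lam / 2 * ξ) * a + (1 / 2 - lam / 2 * ξ) * b
        + lam * Δx * (legendreL H x t ξ - c * ξ)) :
    IsLeast (F '' Set.Icc (-lam⁻¹) lam⁻¹) ((a + b) / 2 - lam * Δx * H x t P) ∧
    deriv (H x t) P ∈ Set.Icc (-lam⁻¹) lam⁻¹ ∧
    F (deriv (H x t) P) = (a + b) / 2 - lam * Δx * H x t P ∧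
    (∀ ξ ∈ Set.Icc (-lam⁻¹) lam⁻¹,
      F ξ = (a + b) / 2 - lam * Δx * H x t P → ξ = deriv (H x t) P) := by
  clear hHper
  have hh2 : ContDiff ℝ 2 (H x t) := by
    have : (H x t) = (fun q : ℝ × ℝ × ℝ => H q.1 q.2.1 q.2.2) ∘ (fun p : ℝ => (x, t, p)) := rfl
    rw [this]
    exact hH1.comp (contDiff_const.prodMk (contDiff_const.prodMk contDiff_id))
  have hdiff : Differentiable ℝ (H x t) := hh2.differentiable (by norm_num)
  have hcont : Continuous (H x t) := hh2.continuous
  have hsm : StrictMono (deriv (H x t)) := strictMono_of_deriv_pos (fun p => hH2 x t p)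
  have hcd : Continuous (deriv (H x t)) := by
    exact hh2.continuous_deriv (by norm_num)
  set ξ₀ := deriv (H x t) P with hξ₀
  -- strict maximality at P for slope ξ₀
  have key : ∀ p : ℝ, p ≠ P → ξ₀ * p - H x t p < ξ₀ * P - H x t P := by
    intro p hp
    rcases lt_or_gt_of_ne hp with hlt | hgt
    · obtain ⟨m, hm, hme⟩ := exists_deriv_eq_slope (H x t) hlt hcont.continuousOn
        hdiff.differentiableOn
      have h1 : deriv (H x t) m < ξ₀ := hsm hm.2
      rw [eq_div_iff (by linarith [hm.1, hm.2] : P - p ≠ 0)] at hme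
      nlinarith [hm.1, hm.2]
    · obtain ⟨m, hm, hme⟩ := exists_deriv_eq_slope (H x t) hgt hcont.continuousOn
        hdiff.differentiableOn
      have h1 : ξ₀ < deriv (H x t) m := hsm hm.1
      rw [eq_div_iff (by linarith [hm.1, hm.2] : p - P ≠ 0)] at hme
      nlinarith [hm.1, hm.2]
  have hLξ₀ : legendreL H x t ξ₀ = ξ₀ * P - H x t P := by
    apply IsGreatest.csSup_eq
    constructor
    · exact ⟨P, rfl⟩
    · rintro y ⟨p, rfl⟩
      rcases eq_or_ne p P with rfl | hp
      · exact le_rfl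
      · exact (key p hp).le
  -- boundedness of the Legendre supremum
  have hbdd : ∀ ξ : ℝ, BddAbove (Set.range fun p => ξ * p - H x t p) := by
    intro ξ
    obtain ⟨R, hR⟩ := hH3 (|ξ| + 1)
    set R' := max R 1 with hR'
    have hR'1 : (1 : ℝ) ≤ R' := le_max_right R 1
    obtain ⟨p₀, hp₀S, hp₀⟩ := (isCompact_Icc (a := -R') (b := R')).exists_isMinOn
      (Set.nonempty_Icc.mpr (by linarith)) hcont.continuousOn
    refine ⟨max 0 (|ξ| * R' - H x t p₀), ?_⟩
    rintro y ⟨p, rfl⟩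
    by_cases hcase : |p| ≤ R'
    · have h1 : H x t p₀ ≤ H x t p := hp₀ (by
        rw [Set.mem_Icc]
        constructor <;> [linarith [abs_le.mp hcase]; linarith [abs_le.mp hcase]])
      have h2 : ξ * p ≤ |ξ| * R' := by
        calc ξ * p ≤ |ξ * p| := le_abs_self _
          _ = |ξ| * |p| := abs_mul _ _
          _ ≤ |ξ| * R' := by
              exact mul_le_mul_of_nonneg_left hcase (abs_nonneg ξ)
      exact le_max_of_le_right (by simp only []; linarith)
    · push_neg at hcase
      have hp0 : (0 : ℝ) < |p| := lt_of_lt_of_le (by linarith) hcase.le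
      have hR2 : |ξ| + 1 ≤ H x t p / |p| := hR x t p ((le_max_left R 1).trans hcase.le)
      have h3 : (|ξ| + 1) * |p| ≤ H x t p := by
        rw [← le_div_iff₀ hp0]; exact hR2
      have h4 : ξ * p ≤ |ξ| * |p| := by
        calc ξ * p ≤ |ξ * p| := le_abs_self _
          _ = |ξ| * |p| := abs_mul _ _
      exact le_max_of_le_left (by simp only []; nlinarith)
  have hlow : ∀ ξ : ℝ, ξ * P - H x t P ≤ legendreL H x t ξ := fun ξ =>
    le_csSup (hbdd ξ) ⟨P, rfl⟩
  -- rewriting F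
  have hFeq : ∀ ξ : ℝ, F ξ = (a + b) / 2 + lam * Δx * (legendreL H x t ξ - P * ξ) := by
    intro ξ
    rw [hF, hP]
    field_simp
    ring
  have hΔt : (0 : ℝ) < lam * Δx := mul_pos hlam hΔx
  have hval : F ξ₀ = (a + b) / 2 - lam * Δx * H x t P := by
    rw [hFeq, hLξ₀]; ring
  have hmem : ξ₀ ∈ Set.Icc (-lam⁻¹) lam⁻¹ := by
    rw [Set.mem_Icc]
    constructor <;> [linarith [(abs_le.mp hCFL).1]; exact (abs_le.mp hCFL).2]
  refine ⟨⟨⟨ξ₀, hmem, hval⟩, ?_⟩, hmem, hval, ?_⟩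
  · rintro y ⟨ξ, hξ, rfl⟩
    rw [hFeq]
    have := hlow ξ
    nlinarith
  · intro ξ hξ hFv
    rw [hFeq] at hFv
    have hLv : legendreL H x t ξ = P * ξ - H x t P := by
      have : lam * Δx * (legendreL H x t ξ - P * ξ) = lam * Δx * (-H x t P) := by linarith
      have h2 := mul_left_cancel₀ (ne_of_gt hΔt) this
      linarith
    by_contra hne
    rcases lt_or_gt_of_ne hne with hlt | hgt
    · -- ξ < ξ₀ : pick q < P with deriv > ξ near P
      obtain ⟨δ, hδ, hδ2⟩ := Metric.continuousAt_iff.mp hcd.continuousAt (ξ₀ - ξ) (by linarith)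
      set q := P - δ / 2 with hq
      have hqP : q < P := by rw [hq]; linarith
      have hd : dist q P < δ := by
        rw [Real.dist_eq, hq]
        rw [abs_of_nonpos (by linarith)]
        linarith
      have h5 : ξ < deriv (H x t) q := by
        have := hδ2 hd
        rw [Real.dist_eq, abs_lt] at this
        linarith
      obtain ⟨m, hm, hme⟩ := exists_deriv_eq_slope (H x t) hqP hcont.continuousOn
        hdiff.differentiableOn
      have h6 : deriv (H x t) q < deriv (H x t) m := hsm hm.1
      rw [eq_div_iff (by linarith [hm.1, hm.2] : P - q ≠ 0)] at hme
      have h7 : ξ * q - H x t q > ξ * P - H x t P := by nlinarith [hm.1, hm.2]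
      have h8 : ξ * q - H x t q ≤ legendreL H x t ξ := le_csSup (hbdd ξ) ⟨q, rfl⟩
      rw [hLv] at h8
      nlinarith
    · -- ξ > ξ₀ : pick q > P with deriv < ξ near P
      obtain ⟨δ, hδ, hδ2⟩ := Metric.continuousAt_iff.mp hcd.continuousAt (ξ - ξ₀) (by linarith)
      set q := P + δ / 2 with hq
      have hqP : P < q := by rw [hq]; linarith
      have hd : dist q P < δ := by
        rw [Real.dist_eq, hq]
        rw [abs_of_nonneg (by linarith)]
        linarith
      have h5 : deriv (H x t) q < ξ := by
        have := hδ2 hd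
        rw [Real.dist_eq, abs_lt] at this
        linarith
      obtain ⟨m, hm, hme⟩ := exists_deriv_eq_slope (H x t) hqP hcont.continuousOn
        hdiff.differentiableOn
      have h6 : deriv (H x t) m < deriv (H x t) q := hsm hm.2
      rw [eq_div_iff (by linarith [hm.1, hm.2] : q - P ≠ 0)] at hme
      have h7 : ξ * q - H x t q > ξ * P - H x t P := by nlinarith [hm.1, hm.2]
      have h8 : ξ * q - H x t q ≤ legendreL H x t ξ := le_csSup (hbdd ξ) ⟨q, rfl⟩
      rw [hLv] at h8
      nlinarith
end

section
/- Proposition 3.2(1) (variance estimate for controlled backward random walks): For every control ξ and every k with l' ≤ k ≤ l+1, one has (d̃^k)² ≤ σ̃^k ≤ ((t_{l+1} − t_k)/λ)·Δx, where σ̃^k := E_{μ(·;ξ)}[|γ^k − η^k(γ)|²] and d̃^k := E_{μ(·;ξ)}[|γ^k − η^k(γ)|]. -/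
/-- The sign (±1) of the step of the backward random walk between time levels
`k-1` and `k`, encoded by the Boolean family `s` indexed by `Finset.Ioc l' (l+1)`
(`true` = step `+Δx`, `false` = step `−Δx`); `0` outside the time window. -/
def stepVal (l' l : ℕ) (s : {k // k ∈ Finset.Ioc l' (l + 1)} → Bool) (k : ℕ) : ℤ :=
  if h : k ∈ Finset.Ioc l' (l + 1) then (if s ⟨k, h⟩ then 1 else -1) else 0

/-- The space index of the path `γ` determined by the steps `s`, at time level `k`:
`γ^{l+1} = x_n` and `γ^k − γ^{k−1} = (stepVal s k)·Δx`. -/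
def pathIdx (n : ℤ) (l' l : ℕ) (s : {k // k ∈ Finset.Ioc l' (l + 1)} → Bool) (k : ℕ) : ℤ :=
  n - ∑ k' ∈ Finset.Ioc k (l + 1), stepVal l' l s k'

/-- The position `γ^k` of the path determined by the steps `s`. -/
noncomputable def pathPos (Δx : ℝ) (n : ℤ) (l' l : ℕ)
    (s : {k // k ∈ Finset.Ioc l' (l + 1)} → Bool) (k : ℕ) : ℝ :=
  (pathIdx n l' l s k : ℝ) * Δx

/-- The probability `μ(γ; ξ)` of the path determined by the steps `s`, under the
control `ξ` (a function of the position and the time index). -/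
noncomputable def pathProb (Δx lam : ℝ) (n : ℤ) (l' l : ℕ) (ξ : ℝ → ℕ → ℝ)
    (s : {k // k ∈ Finset.Ioc l' (l + 1)} → Bool) : ℝ :=
  ∏ k ∈ Finset.Ioc l' (l + 1),
    (1 / 2 + lam / 2 * (stepVal l' l s k : ℝ) * ξ (pathPos Δx n l' l s k) k)

/-- The expectation `E_{μ(·;ξ)}[f(γ)]` over all backward paths. -/
noncomputable def walkExp (Δx lam : ℝ) (n : ℤ) (l' l : ℕ) (ξ : ℝ → ℕ → ℝ)
    (f : ({k // k ∈ Finset.Ioc l' (l + 1)} → Bool) → ℝ) : ℝ :=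
  ∑ s : {k // k ∈ Finset.Ioc l' (l + 1)} → Bool, pathProb Δx lam n l' l ξ s * f s

/-- The random variable `η^k(γ) = γ^{l+1} − Σ_{k<k'≤l+1} ξ(γ^{k'}, t_{k'}) Δt`. -/
noncomputable def etaVal (Δx Δt : ℝ) (n : ℤ) (l' l : ℕ) (ξ : ℝ → ℕ → ℝ)
    (s : {k // k ∈ Finset.Ioc l' (l + 1)} → Bool) (k : ℕ) : ℝ :=
  (n : ℝ) * Δx - ∑ k' ∈ Finset.Ioc k (l + 1), ξ (pathPos Δx n l' l s k') k' * Δt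

/-!
Write `D^k = γ^k - η^k`. Then `D^{l+1} = 0` and
`D^k = D^{k+1} + ξ(γ^{k+1}, t_{k+1}) Δt - (γ^{k+1} - γ^k)`. Given the steps above level `k + 1`,
the step `γ^{k+1} - γ^k = ±Δx` has mean `λξΔx = ξΔt`, so the increment of `D` is centred with second moment `Δx² (1 - (λξ)²) ≤ Δx²`. Hence
`E (D^k)² ≤ E (D^{k+1})² + Δx²`, and summing gives `(l + 1 - k) Δx² = (t_{l+1} - t_k) Δx / λ`.
The first inequality is Jensen's.

To condition on the steps above a level `j` without conditional expectations, we compare with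
the walk whose steps at levels `≤ j` are fair coin flips; pairing each path with the one whose
step at level `j + 1` is flipped integrates that step out.
-/

open Finset

lemma abs_mul_le_one_of_mem_Icc {a x : ℝ} (hx : x ∈ Set.Icc (-a⁻¹) a⁻¹) : |a * x| ≤ 1 := by
  have ha : 0 ≤ a := inv_nonneg.mp (by linarith [hx.1, hx.2])
  calc |a * x| = a * |x| := by rw [abs_mul, abs_of_nonneg ha]
    _ ≤ a * a⁻¹ := mul_le_mul_of_nonneg_left (abs_le.mpr hx) ha
    _ ≤ 1 := mul_inv_le_one

lemma two_point_mean_sq (σ lam ξ x Δx : ℝ) (hσ : σ ^ 2 = 1) :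
    (1 / 2 + lam / 2 * σ * ξ) * (x + ξ * (lam * Δx) - σ * Δx) ^ 2
      + (1 - (1 / 2 + lam / 2 * σ * ξ)) * (x + ξ * (lam * Δx) + σ * Δx) ^ 2
      = x ^ 2 + Δx ^ 2 * (1 - (lam * ξ) ^ 2) := by
  linear_combination (Δx ^ 2 - 2 * lam * ξ * Δx * (x + ξ * (lam * Δx))) * hσ

lemma sq_sum_mul_le_sum_mul_sq {ι : Type*} (t : Finset ι) {w X : ι → ℝ}
    (hw : ∀ i ∈ t, 0 ≤ w i) (hw1 : ∑ i ∈ t, w i = 1) :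
    (∑ i ∈ t, w i * X i) ^ 2 ≤ ∑ i ∈ t, w i * X i ^ 2 := by
  have hsq : ∀ i ∈ t, (w i * X i) ^ 2 ≤ w i * (w i * X i ^ 2) := fun i _ => le_of_eq (by ring)
  simpa [hw1] using sum_sq_le_sum_mul_sum_of_sq_le_mul t hw
    (fun i hi => mul_nonneg (hw i hi) (sq_nonneg (X i))) hsq

namespace BackwardWalk

abbrev Path (l' l : ℕ) := {k // k ∈ Ioc l' (l + 1)} → Bool

variable {Δx Δt lam : ℝ} {n : ℤ} {l' l : ℕ} {ξ : ℝ → ℕ → ℝ}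

def flipAt (i : ℕ) (s : Path l' l) : Path l' l :=
  fun k => if (k : ℕ) = i then !s k else s k

lemma flipAt_involutive (i : ℕ) : Function.Involutive (flipAt (l' := l') (l := l) i) := by
  intro s
  funext k
  unfold flipAt
  split_ifs <;> simp

lemma stepVal_flipAt (i k : ℕ) (s : Path l' l) :
    stepVal l' l (flipAt i s) k = if k = i then -stepVal l' l s k else stepVal l' l s k := by
  unfold stepVal flipAt
  split_ifs <;> simp_all

lemma sq_stepVal {k : ℕ} (hk : k ∈ Ioc l' (l + 1)) (s : Path l' l) :
    (stepVal l' l s k : ℝ) ^ 2 = 1 := by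
  unfold stepVal
  rw [dif_pos hk]
  split_ifs <;> norm_num

lemma abs_stepVal_le_one (s : Path l' l) (k : ℕ) : |(stepVal l' l s k : ℝ)| ≤ 1 := by
  unfold stepVal
  split_ifs <;> norm_num

lemma pathPos_flipAt_of_le {i k : ℕ} (h : i ≤ k) (s : Path l' l) :
    pathPos Δx n l' l (flipAt i s) k = pathPos Δx n l' l s k := by
  unfold pathPos pathIdx
  congr 3
  refine sum_congr rfl fun k' hk' => ?_
  rw [stepVal_flipAt, if_neg (by have := (mem_Ioc.mp hk').1; omega)]

lemma etaVal_flipAt_of_le {i k : ℕ} (h : i ≤ k) (s : Path l' l) :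
    etaVal Δx Δt n l' l ξ (flipAt i s) k = etaVal Δx Δt n l' l ξ s k := by
  unfold etaVal
  congr 1
  refine sum_congr rfl fun k' hk' => ?_
  rw [pathPos_flipAt_of_le (h.trans (mem_Ioc.mp hk').1.le)]

lemma pathPos_eq_succ {k : ℕ} (hk : k < l + 1) (s : Path l' l) :
    pathPos Δx n l' l s k = pathPos Δx n l' l s (k + 1) - stepVal l' l s (k + 1) * Δx := by
  unfold pathPos pathIdx
  rw [← insert_Ioc_add_one_left_eq_Ioc hk, sum_insert (by simp)]
  push_cast
  ring

lemma etaVal_eq_succ {k : ℕ} (hk : k < l + 1) (s : Path l' l) :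
    etaVal Δx Δt n l' l ξ s k
      = etaVal Δx Δt n l' l ξ s (k + 1) - ξ (pathPos Δx n l' l s (k + 1)) (k + 1) * Δt := by
  unfold etaVal
  rw [← insert_Ioc_add_one_left_eq_Ioc hk, sum_insert (by simp)]
  ring

noncomputable def deviation (Δx Δt : ℝ) (n : ℤ) (l' l : ℕ) (ξ : ℝ → ℕ → ℝ) (k : ℕ)
    (s : Path l' l) : ℝ :=
  pathPos Δx n l' l s k - etaVal Δx Δt n l' l ξ s k

lemma deviation_top (s : Path l' l) : deviation Δx Δt n l' l ξ (l + 1) s = 0 := by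
  simp [deviation, pathPos, pathIdx, etaVal]

lemma deviation_flipAt_of_le {i k : ℕ} (h : i ≤ k) (s : Path l' l) :
    deviation Δx Δt n l' l ξ k (flipAt i s) = deviation Δx Δt n l' l ξ k s := by
  rw [deviation, deviation, pathPos_flipAt_of_le h, etaVal_flipAt_of_le h]

lemma deviation_eq_succ {k : ℕ} (hk : k < l + 1) (s : Path l' l) :
    deviation Δx Δt n l' l ξ k s = deviation Δx Δt n l' l ξ (k + 1) s
      + ξ (pathPos Δx n l' l s (k + 1)) (k + 1) * Δt - stepVal l' l s (k + 1) * Δx := by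
  rw [deviation, deviation, pathPos_eq_succ hk, etaVal_eq_succ hk]
  ring

lemma deviation_flipAt_succ {k : ℕ} (hk : k < l + 1) (s : Path l' l) :
    deviation Δx Δt n l' l ξ k (flipAt (k + 1) s) = deviation Δx Δt n l' l ξ (k + 1) s
      + ξ (pathPos Δx n l' l s (k + 1)) (k + 1) * Δt + stepVal l' l s (k + 1) * Δx := by
  rw [deviation_eq_succ hk, deviation_flipAt_of_le le_rfl, pathPos_flipAt_of_le le_rfl,
    stepVal_flipAt, if_pos rfl]
  push_cast
  ring

noncomputable def stepWeight (Δx lam : ℝ) (n : ℤ) (l' l : ℕ) (ξ : ℝ → ℕ → ℝ)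
    (s : Path l' l) (k : ℕ) : ℝ :=
  1 / 2 + lam / 2 * (stepVal l' l s k : ℝ) * ξ (pathPos Δx n l' l s k) k

lemma stepWeight_nonneg (hξ : ∀ x k, |lam * ξ x k| ≤ 1) (s : Path l' l) (k : ℕ) :
    0 ≤ stepWeight Δx lam n l' l ξ s k := by
  have h : |(stepVal l' l s k : ℝ) * (lam * ξ (pathPos Δx n l' l s k) k)| ≤ 1 := by
    rw [abs_mul]
    exact mul_le_one₀ (abs_stepVal_le_one s k) (abs_nonneg _) (hξ _ _)
  unfold stepWeight
  linarith [neg_abs_le ((stepVal l' l s k : ℝ) * (lam * ξ (pathPos Δx n l' l s k) k))]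

lemma stepWeight_flipAt_self (k : ℕ) (s : Path l' l) :
    stepWeight Δx lam n l' l ξ (flipAt k s) k = 1 - stepWeight Δx lam n l' l ξ s k := by
  rw [stepWeight, stepWeight, stepVal_flipAt, if_pos rfl, pathPos_flipAt_of_le le_rfl]
  push_cast
  ring

lemma stepWeight_flipAt_of_lt {i k : ℕ} (h : i < k) (s : Path l' l) :
    stepWeight Δx lam n l' l ξ (flipAt i s) k = stepWeight Δx lam n l' l ξ s k := by
  rw [stepWeight, stepWeight, stepVal_flipAt, if_neg h.ne', pathPos_flipAt_of_le h.le]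

/-- The law of the walk whose steps at levels `≤ j` are fair coin flips and whose steps at
levels `> j` follow the control; `j = l'` is `μ(·; ξ)`. -/
noncomputable def mixedWeight (Δx lam : ℝ) (n : ℤ) (l' l : ℕ) (ξ : ℝ → ℕ → ℝ) (j : ℕ)
    (s : Path l' l) : ℝ :=
  (1 / 2) ^ (j - l') * ∏ k ∈ Ioc j (l + 1), stepWeight Δx lam n l' l ξ s k

noncomputable def mixedExp (Δx lam : ℝ) (n : ℤ) (l' l : ℕ) (ξ : ℝ → ℕ → ℝ) (j : ℕ)
    (f : Path l' l → ℝ) : ℝ :=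
  ∑ s, mixedWeight Δx lam n l' l ξ j s * f s

lemma walkExp_eq_mixedExp (f : Path l' l → ℝ) :
    walkExp Δx lam n l' l ξ f = mixedExp Δx lam n l' l ξ l' f := by
  simp [walkExp, mixedExp, mixedWeight, pathProb, stepWeight]

lemma mixedWeight_nonneg (hξ : ∀ x k, |lam * ξ x k| ≤ 1) (j : ℕ) (s : Path l' l) :
    0 ≤ mixedWeight Δx lam n l' l ξ j s :=
  mul_nonneg (by positivity) (prod_nonneg fun k _ => stepWeight_nonneg hξ s k)

lemma mixedWeight_flipAt_of_le {i j : ℕ} (h : i ≤ j) (s : Path l' l) :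
    mixedWeight Δx lam n l' l ξ j (flipAt i s) = mixedWeight Δx lam n l' l ξ j s := by
  unfold mixedWeight
  congr 1
  exact prod_congr rfl fun k hk => stepWeight_flipAt_of_lt (h.trans_lt (mem_Ioc.mp hk).1) s

lemma mixedWeight_eq_succ {j : ℕ} (hj : l' ≤ j) (hjl : j < l + 1) (s : Path l' l) :
    mixedWeight Δx lam n l' l ξ j s
      = 2 * stepWeight Δx lam n l' l ξ s (j + 1) * mixedWeight Δx lam n l' l ξ (j + 1) s := by
  unfold mixedWeight
  rw [← insert_Ioc_add_one_left_eq_Ioc hjl, prod_insert (by simp), Nat.sub_add_comm hj, pow_succ]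
  ring

lemma mixedExp_eq_sum_succ {j : ℕ} (hj : l' ≤ j) (hjl : j < l + 1) (f : Path l' l → ℝ) :
    mixedExp Δx lam n l' l ξ j f
      = ∑ s, mixedWeight Δx lam n l' l ξ (j + 1) s
          * (stepWeight Δx lam n l' l ξ s (j + 1) * f s
            + (1 - stepWeight Δx lam n l' l ξ s (j + 1)) * f (flipAt (j + 1) s)) := by
  set w := mixedWeight Δx lam n l' l ξ (j + 1)
  set p := fun s => stepWeight Δx lam n l' l ξ s (j + 1)
  have hflip : ∑ s, w s * p s * f s = ∑ s, w s * (1 - p s) * f (flipAt (j + 1) s) := by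
    rw [← Equiv.sum_comp ((flipAt_involutive (j + 1)).toPerm _)]
    refine sum_congr rfl fun s _ => ?_
    simp only [Function.Involutive.coe_toPerm, w, p, mixedWeight_flipAt_of_le le_rfl,
      stepWeight_flipAt_self]
  calc mixedExp Δx lam n l' l ξ j f
        = ∑ s, w s * p s * f s + ∑ s, w s * (1 - p s) * f (flipAt (j + 1) s) := by
        rw [← hflip, ← two_mul, mul_sum]
        exact sum_congr rfl fun s _ => by rw [mixedWeight_eq_succ hj hjl]; ring
    _ = _ := by
        rw [← sum_add_distrib]
        exact sum_congr rfl fun s _ => by ring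

lemma mixedExp_succ_of_flipAt_invariant {j : ℕ} (hj : l' ≤ j) (hjl : j < l + 1)
    {f : Path l' l → ℝ} (hf : ∀ s, f (flipAt (j + 1) s) = f s) :
    mixedExp Δx lam n l' l ξ j f = mixedExp Δx lam n l' l ξ (j + 1) f := by
  rw [mixedExp_eq_sum_succ hj hjl]
  exact sum_congr rfl fun s _ => by rw [hf]; ring

lemma mixedExp_eq_of_flipAt_invariant {j K : ℕ} (hj : l' ≤ j) (hjK : j ≤ K) (hK : K ≤ l + 1)
    {f : Path l' l → ℝ} (hf : ∀ i, j < i → i ≤ K → ∀ s, f (flipAt i s) = f s) :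
    mixedExp Δx lam n l' l ξ j f = mixedExp Δx lam n l' l ξ K f := by
  induction K, hjK using Nat.le_induction with
  | base => rfl
  | succ K hjK ih =>
    rw [ih (by omega) fun i hi hiK => hf i hi (by omega),
      mixedExp_succ_of_flipAt_invariant (hj.trans hjK) (by omega) (hf (K + 1) (by omega) le_rfl)]

lemma mixedExp_const {j : ℕ} (hj : l' ≤ j) (hjl : j ≤ l + 1) (c : ℝ) :
    mixedExp Δx lam n l' l ξ j (fun _ => c) = c := by
  rw [mixedExp_eq_of_flipAt_invariant hj hjl le_rfl fun _ _ _ _ => rfl]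
  simp only [mixedExp, mixedWeight, Ioc_self, prod_empty, mul_one, ← sum_mul, sum_const,
    card_univ, Fintype.card_fun, Fintype.card_coe, Nat.card_Ioc, Fintype.card_bool, nsmul_eq_mul]
  push_cast
  rw [← mul_pow]
  norm_num

lemma mixedExp_add_const {j : ℕ} (hj : l' ≤ j) (hjl : j ≤ l + 1) (f : Path l' l → ℝ) (c : ℝ) :
    mixedExp Δx lam n l' l ξ j (fun s => f s + c) = mixedExp Δx lam n l' l ξ j f + c := by
  simp only [mixedExp, mul_add, sum_add_distrib]
  rw [← mixedExp, ← mixedExp, mixedExp_const hj hjl]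

lemma mixedExp_deviation_sq_le_succ (hξ : ∀ x k, |lam * ξ x k| ≤ 1) (hΔt : Δt = lam * Δx)
    {k : ℕ} (hk : l' ≤ k) (hkl : k < l + 1) :
    mixedExp Δx lam n l' l ξ k (fun s => deviation Δx Δt n l' l ξ k s ^ 2)
      ≤ mixedExp Δx lam n l' l ξ (k + 1) (fun s => deviation Δx Δt n l' l ξ (k + 1) s ^ 2)
        + Δx ^ 2 := by
  rw [mixedExp_eq_sum_succ hk hkl, ← mixedExp_add_const (by omega) hkl]
  refine sum_le_sum fun s _ => mul_le_mul_of_nonneg_left ?_ (mixedWeight_nonneg hξ _ s)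
  rw [deviation_flipAt_succ hkl, deviation_eq_succ hkl, stepWeight, hΔt,
    two_point_mean_sq _ _ _ _ _ (sq_stepVal (by simp only [mem_Ioc]; omega) s)]
  nlinarith [sq_nonneg Δx, sq_nonneg (lam * ξ (pathPos Δx n l' l s (k + 1)) (k + 1))]

lemma mixedExp_deviation_sq_le (hξ : ∀ x k, |lam * ξ x k| ≤ 1) (hΔt : Δt = lam * Δx)
    {k : ℕ} (hk : l' ≤ k) (hkl : k ≤ l + 1) :
    mixedExp Δx lam n l' l ξ k (fun s => deviation Δx Δt n l' l ξ k s ^ 2)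
      ≤ ((l : ℝ) + 1 - k) * Δx ^ 2 := by
  induction hkl using Nat.decreasingInduction with
  | self => simp [deviation_top, mixedExp]
  | of_succ k hkl ih =>
    calc _ ≤ _ := mixedExp_deviation_sq_le_succ hξ hΔt hk hkl
      _ ≤ ((l : ℝ) + 1 - (k + 1 : ℕ)) * Δx ^ 2 + Δx ^ 2 := by gcongr; exact ih (by omega)
      _ = ((l : ℝ) + 1 - k) * Δx ^ 2 := by push_cast; ring

lemma walkExp_deviation_sq_le (hξ : ∀ x k, |lam * ξ x k| ≤ 1) (hΔt : Δt = lam * Δx)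
    {k : ℕ} (hk : l' ≤ k) (hkl : k ≤ l + 1) :
    walkExp Δx lam n l' l ξ (fun s => deviation Δx Δt n l' l ξ k s ^ 2)
      ≤ ((l : ℝ) + 1 - k) * Δx ^ 2 := by
  rw [walkExp_eq_mixedExp, mixedExp_eq_of_flipAt_invariant le_rfl hk hkl
    fun i _ hik s => by rw [deviation_flipAt_of_le hik]]
  exact mixedExp_deviation_sq_le hξ hΔt hk hkl

lemma sq_walkExp_le_walkExp_sq (hξ : ∀ x k, |lam * ξ x k| ≤ 1) (hl : l' ≤ l + 1)
    (f : Path l' l → ℝ) :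
    walkExp Δx lam n l' l ξ f ^ 2 ≤ walkExp Δx lam n l' l ξ (fun s => f s ^ 2) := by
  simp only [walkExp_eq_mixedExp, mixedExp]
  refine sq_sum_mul_le_sum_mul_sq _ (fun s _ => mixedWeight_nonneg hξ _ s) ?_
  simpa [mixedExp] using mixedExp_const (Δx := Δx) (lam := lam) (n := n) (ξ := ξ) le_rfl hl 1

end BackwardWalk

open BackwardWalk in
theorem statement4_general
    (Δx Δt lam : ℝ) (hΔx : 0 < Δx) (hΔt : 0 < Δt) (hlam : lam = Δt / Δx)
    (n : ℤ) (l' l : ℕ)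
    (ξ : ℝ → ℕ → ℝ) (hξ : ∀ (x : ℝ) (k : ℕ), ξ x k ∈ Set.Icc (-lam⁻¹) lam⁻¹)
    (k : ℕ) (hk₁ : l' ≤ k) (hk₂ : k ≤ l + 1) :
    (walkExp Δx lam n l' l ξ
        (fun s => |pathPos Δx n l' l s k - etaVal Δx Δt n l' l ξ s k|)) ^ 2
      ≤ walkExp Δx lam n l' l ξ
          (fun s => (pathPos Δx n l' l s k - etaVal Δx Δt n l' l ξ s k) ^ 2) ∧
    walkExp Δx lam n l' l ξ
        (fun s => (pathPos Δx n l' l s k - etaVal Δx Δt n l' l ξ s k) ^ 2)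
      ≤ (((l : ℝ) + 1) * Δt - (k : ℝ) * Δt) / lam * Δx := by
  have hcontrol : ∀ x k, |lam * ξ x k| ≤ 1 := fun x k => abs_mul_le_one_of_mem_Icc (hξ x k)
  have hΔt' : Δt = lam * Δx := by rw [hlam, div_mul_cancel₀ _ hΔx.ne']
  refine ⟨?_, ?_⟩
  · have hjensen := sq_walkExp_le_walkExp_sq (Δx := Δx) (n := n) hcontrol (hk₁.trans hk₂)
      fun s => |deviation Δx Δt n l' l ξ k s|
    simp only [sq_abs] at hjensen
    exact hjensen
  · calc _ ≤ ((l : ℝ) + 1 - k) * Δx ^ 2 := walkExp_deviation_sq_le hcontrol hΔt' hk₁ hk₂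
      _ = _ := by rw [hlam]; field_simp

/-- Proposition 3.2(1): for every control `ξ` and every
`l' ≤ k ≤ l+1`, `(d̃^k)² ≤ σ̃^k ≤ ((t_{l+1} − t_k)/λ)·Δx`, where
`σ̃^k = E[|γ^k − η^k(γ)|²]` and `d̃^k = E[|γ^k − η^k(γ)|]`. -/
theorem statement4
    (Δx Δt lam : ℝ) (hΔx : 0 < Δx) (hΔt : 0 < Δt) (hlam : lam = Δt / Δx)
    (n : ℤ) (l' l : ℕ) (hl' : l' < l + 1)
    (hodd : (n + (l : ℤ) + 1) % 2 = 1)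
    (ξ : ℝ → ℕ → ℝ) (hξ : ∀ (x : ℝ) (k : ℕ), ξ x k ∈ Set.Icc (-lam⁻¹) lam⁻¹)
    (k : ℕ) (hk₁ : l' ≤ k) (hk₂ : k ≤ l + 1) :
    (walkExp Δx lam n l' l ξ
        (fun s => |pathPos Δx n l' l s k - etaVal Δx Δt n l' l ξ s k|)) ^ 2
      ≤ walkExp Δx lam n l' l ξ
          (fun s => (pathPos Δx n l' l s k - etaVal Δx Δt n l' l ξ s k) ^ 2) ∧
    walkExp Δx lam n l' l ξ
        (fun s => (pathPos Δx n l' l s k - etaVal Δx Δt n l' l ξ s k) ^ 2)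
      ≤ (((l : ℝ) + 1) * Δt - (k : ℝ) * Δt) / lam * Δx :=
  statement4_general Δx Δt lam hΔx hΔt hlam n l' l ξ hξ k hk₁ hk₂
end

section
/- Proposition 3.2(2) (variance estimate under a Lipschitz control): Let θ > 0 and suppose the control ξ (extended with values in [−λ^{-1},λ^{-1}] to all odd grid points (x_{m+1},t_k) with l' ≤ k ≤ l+1) satisfies the Lipschitz condition at the averaged path: |ξ^k_{m+1} − ξ^k_*| ≤ θ·|x_{m+1} − γ̄^k| for all such grid points, where γ̄^k := E_{μ(·;ξ)}[γ^k] and ξ^k_* := ξ^k_{m(γ̄^k)} + ((ξ^k_{m(γ̄^k)+2} − ξ^k_{m(γ̄^k)})/(2Δx))·(γ̄^k − x_{m(γ̄^k)}), with m(x) denoting the integer m such that m+k is odd and x ∈ [x_m, x_m + 2Δx). Then σ^k := E_{μ(·;ξ)}[|γ^k − γ̄^k|²] ≤ (e^{4θ(t_{l+1} − t_k)}/(4θλ))·Δx for all l' ≤ k ≤ l+1. -/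
/-- `mIdx Δx k x` is the integer `m` with `m + k` odd and `x ∈ [mΔx, mΔx + 2Δx)`. -/
noncomputable def mIdx (Δx : ℝ) (k : ℕ) (x : ℝ) : ℤ :=
  if (⌊x / Δx⌋ + (k : ℤ)) % 2 = 1 then ⌊x / Δx⌋ else ⌊x / Δx⌋ - 1

namespace St5Aux

lemma zmod2_cast (x : ℤ) (h : (x : ZMod 2) = 1) : x % 2 = 1 := by
  have h2 : x % 2 = 0 ∨ x % 2 = 1 := Int.emod_two_eq x
  rcases h2 with h0 | h1
  · exfalso
    have : (2:ℤ) ∣ x := Int.dvd_of_emod_eq_zero h0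
    rw [(ZMod.intCast_zmod_eq_zero_iff_dvd x 2).2 this] at h
    exact one_ne_zero h.symm
  · exact h1

lemma zmod2_of (x : ℤ) (h : x % 2 = 1) : (x : ZMod 2) = 1 := by
  have : x = 2 * (x / 2) + 1 := by omega
  rw [this]
  push_cast
  have h2 : (2 : ZMod 2) = 0 := by decide
  rw [h2]
  ring

/-- the space of step configurations -/
abbrev SS (l' l : ℕ) := {k // k ∈ Finset.Ioc l' (l + 1)} → Bool

/-- one factor of the path probability -/
noncomputable def fac (Δx lam : ℝ) (n : ℤ) (l' l : ℕ) (ξ : ℝ → ℕ → ℝ)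
    (s : SS l' l) (k : ℕ) : ℝ :=
  1 / 2 + lam / 2 * (stepVal l' l s k : ℝ) * ξ (pathPos Δx n l' l s k) k

/-- partial product of path-probability factors over time levels in `Ioc k (l+1)` -/
noncomputable def FF (Δx lam : ℝ) (n : ℤ) (l' l : ℕ) (ξ : ℝ → ℕ → ℝ)
    (k : ℕ) (s : SS l' l) : ℝ :=
  ∏ k' ∈ Finset.Ioc k (l + 1), fac Δx lam n l' l ξ s k'

variable (Δx lam : ℝ) (n : ℤ) (l' l : ℕ) (ξ : ℝ → ℕ → ℝ)

lemma pathProb_eq_FF (s : SS l' l) :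
    pathProb Δx lam n l' l ξ s = FF Δx lam n l' l ξ l' s := rfl

lemma stepVal_eq (s : SS l' l) (k : ℕ) (h : k ∈ Finset.Ioc l' (l + 1)) :
    stepVal l' l s k = if s ⟨k, h⟩ then 1 else -1 := dif_pos h

lemma stepVal_update_ne (s : SS l' l) (i : {k // k ∈ Finset.Ioc l' (l + 1)}) (b : Bool)
    (k : ℕ) (hk : k ≠ (i : ℕ)) :
    stepVal l' l (Function.update s i b) k = stepVal l' l s k := by
  unfold stepVal
  split
  · next h =>
    rw [Function.update_of_ne (fun he => hk (congrArg Subtype.val he))]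
  · rfl

lemma stepVal_update_self (s : SS l' l) (i : {k // k ∈ Finset.Ioc l' (l + 1)}) (b : Bool) :
    stepVal l' l (Function.update s i b) (i : ℕ) = (if b then 1 else -1) := by
  unfold stepVal
  rw [dif_pos i.2, Subtype.coe_eta, Function.update_self]

lemma pathIdx_update (s : SS l' l) (i : {k // k ∈ Finset.Ioc l' (l + 1)}) (b : Bool)
    (k : ℕ) (hk : (i : ℕ) ≤ k) :
    pathIdx n l' l (Function.update s i b) k = pathIdx n l' l s k := by
  unfold pathIdx
  congr 1
  apply Finset.sum_congr rfl
  intro k' hk'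
  have := (Finset.mem_Ioc.1 hk').1
  exact stepVal_update_ne l' l s i b k' (by omega)

lemma pathPos_update (s : SS l' l) (i : {k // k ∈ Finset.Ioc l' (l + 1)}) (b : Bool)
    (k : ℕ) (hk : (i : ℕ) ≤ k) :
    pathPos Δx n l' l (Function.update s i b) k = pathPos Δx n l' l s k := by
  unfold pathPos
  rw [pathIdx_update n l' l s i b k hk]

lemma fac_update (s : SS l' l) (i : {k // k ∈ Finset.Ioc l' (l + 1)}) (b : Bool)
    (k : ℕ) (hk : (i : ℕ) < k) :
    fac Δx lam n l' l ξ (Function.update s i b) k = fac Δx lam n l' l ξ s k := by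
  unfold fac
  rw [stepVal_update_ne l' l s i b k (by omega),
    pathPos_update Δx n l' l s i b k (le_of_lt hk)]

lemma FF_update (s : SS l' l) (i : {k // k ∈ Finset.Ioc l' (l + 1)}) (b : Bool)
    (k : ℕ) (hk : (i : ℕ) ≤ k) :
    FF Δx lam n l' l ξ k (Function.update s i b) = FF Δx lam n l' l ξ k s := by
  unfold FF
  apply Finset.prod_congr rfl
  intro k' hk'
  have := (Finset.mem_Ioc.1 hk').1
  exact fac_update Δx lam n l' l ξ s i b k' (by omega)

lemma sum_flip_zero {ι : Type*} [DecidableEq ι] [Fintype ι] (i : ι) (h : (ι → Bool) → ℝ)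
    (hh : ∀ s, h (Function.update s i (! s i)) = - h s) :
    ∑ s : ι → Bool, h s = 0 := by
  have hinv : Function.Involutive (fun s : ι → Bool => Function.update s i (! s i)) := by
    intro s
    simp [Function.update_idem]
  have h1 : ∑ s : ι → Bool, h (Function.update s i (! s i)) = ∑ s : ι → Bool, h s :=
    hinv.bijective.sum_comp h
  have h2 : ∑ s : ι → Bool, h (Function.update s i (! s i)) = ∑ s : ι → Bool, - h s :=
    Finset.sum_congr rfl (fun s _ => hh s)
  rw [h2, Finset.sum_neg_distrib] at h1
  linarith

lemma sum_fac_const (k0 : ℕ) (hk0 : k0 ∈ Finset.Ioc l' (l + 1)) (g : SS l' l → ℝ)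
    (hg : ∀ (s : SS l' l) (b : Bool), g (Function.update s ⟨k0, hk0⟩ b) = g s) :
    ∑ s : SS l' l, fac Δx lam n l' l ξ s k0 * g s = (1 / 2) * ∑ s : SS l' l, g s := by
  have hsplit : ∀ s : SS l' l, fac Δx lam n l' l ξ s k0 * g s
      = (1 / 2) * g s
        + (lam / 2 * ξ (pathPos Δx n l' l s k0) k0) * ((stepVal l' l s k0 : ℝ) * g s) := by
    intro s; unfold fac; ring
  rw [Finset.sum_congr rfl (fun s _ => hsplit s), Finset.sum_add_distrib, ← Finset.mul_sum]
  have hzero : ∑ s : SS l' l,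
      (lam / 2 * ξ (pathPos Δx n l' l s k0) k0) * ((stepVal l' l s k0 : ℝ) * g s) = 0 := by
    apply sum_flip_zero (⟨k0, hk0⟩ : {k // k ∈ Finset.Ioc l' (l + 1)})
    intro s
    rw [hg, pathPos_update Δx n l' l s _ _ k0 (le_refl _)]
    have hstep : stepVal l' l (Function.update s ⟨k0, hk0⟩ (! s ⟨k0, hk0⟩)) k0
        = (if ! s ⟨k0, hk0⟩ then 1 else -1) :=
      stepVal_update_self l' l s ⟨k0, hk0⟩ _
    rw [hstep, stepVal_eq l' l s k0 hk0]
    cases s ⟨k0, hk0⟩ <;> norm_num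
  rw [hzero]; ring

lemma sum_fac_step (k0 : ℕ) (hk0 : k0 ∈ Finset.Ioc l' (l + 1)) (g : SS l' l → ℝ)
    (hg : ∀ (s : SS l' l) (b : Bool), g (Function.update s ⟨k0, hk0⟩ b) = g s) :
    ∑ s : SS l' l, fac Δx lam n l' l ξ s k0 * ((stepVal l' l s k0 : ℝ) * g s)
      = ∑ s : SS l' l, (lam / 2) * (ξ (pathPos Δx n l' l s k0) k0 * g s) := by
  have hsplit : ∀ s : SS l' l, fac Δx lam n l' l ξ s k0 * ((stepVal l' l s k0 : ℝ) * g s)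
      = (1 / 2) * ((stepVal l' l s k0 : ℝ) * g s)
        + (lam / 2) * (ξ (pathPos Δx n l' l s k0) k0 * g s) := by
    intro s
    have hsq : ((stepVal l' l s k0 : ℤ) : ℝ) * ((stepVal l' l s k0 : ℤ) : ℝ) = 1 := by
      rw [stepVal_eq l' l s k0 hk0]; cases s ⟨k0, hk0⟩ <;> norm_num
    unfold fac
    linear_combination (lam / 2 * ξ (pathPos Δx n l' l s k0) k0 * g s) * hsq
  rw [Finset.sum_congr rfl (fun s _ => hsplit s), Finset.sum_add_distrib]
  have hzero : ∑ s : SS l' l, (1 / 2) * ((stepVal l' l s k0 : ℝ) * g s) = 0 := by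
    apply sum_flip_zero (⟨k0, hk0⟩ : {k // k ∈ Finset.Ioc l' (l + 1)})
    intro s
    rw [hg]
    have hstep : stepVal l' l (Function.update s ⟨k0, hk0⟩ (! s ⟨k0, hk0⟩)) k0
        = (if ! s ⟨k0, hk0⟩ then 1 else -1) :=
      stepVal_update_self l' l s ⟨k0, hk0⟩ _
    rw [hstep, stepVal_eq l' l s k0 hk0]
    cases s ⟨k0, hk0⟩ <;> norm_num
  rw [hzero]; ring

lemma FF_succ (j : ℕ) (hj : j < l + 1) (s : SS l' l) :
    FF Δx lam n l' l ξ j s = fac Δx lam n l' l ξ s (j + 1) * FF Δx lam n l' l ξ (j + 1) s := by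
  unfold FF
  rw [← Finset.prod_Ioc_consecutive _ (Nat.le_succ j) hj]
  congr 1
  rw [Nat.Ioc_succ_singleton, Finset.prod_singleton]

lemma sum_FF_succ (j : ℕ) (hm : j + 1 ∈ Finset.Ioc l' (l + 1)) (g : SS l' l → ℝ)
    (hg : ∀ (s : SS l' l) (b : Bool), g (Function.update s ⟨j + 1, hm⟩ b) = g s) :
    ∑ s : SS l' l, FF Δx lam n l' l ξ j s * g s
      = (1 / 2) * ∑ s : SS l' l, FF Δx lam n l' l ξ (j + 1) s * g s := by
  have hjl : j < l + 1 := by have := (Finset.mem_Ioc.1 hm).2; omega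
  have step1 : ∑ s : SS l' l, FF Δx lam n l' l ξ j s * g s
      = ∑ s : SS l' l, fac Δx lam n l' l ξ s (j + 1) * (FF Δx lam n l' l ξ (j + 1) s * g s) := by
    apply Finset.sum_congr rfl
    intro s _
    rw [FF_succ Δx lam n l' l ξ j hjl s]; ring
  rw [step1]
  apply sum_fac_const Δx lam n l' l ξ (j + 1) hm
  intro s b
  rw [FF_update Δx lam n l' l ξ s ⟨j + 1, hm⟩ b (j + 1) (le_refl _), hg]

lemma sum_FF_of_indep (Kmax : ℕ) (hKl : Kmax ≤ l + 1) (g : SS l' l → ℝ)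
    (hg : ∀ (k0 : ℕ) (hk0 : k0 ∈ Finset.Ioc l' (l + 1)), k0 ≤ Kmax →
        ∀ (s : SS l' l) (b : Bool), g (Function.update s ⟨k0, hk0⟩ b) = g s) :
    ∀ K, l' ≤ K → K ≤ Kmax →
    ∑ s : SS l' l, FF Δx lam n l' l ξ l' s * g s
      = (1 / 2 : ℝ) ^ (K - l') * ∑ s : SS l' l, FF Δx lam n l' l ξ K s * g s := by
  intro K hK
  induction K, hK using Nat.le_induction with
  | base => intro _; simp
  | succ K hK ih =>
    intro hK1
    have hKK : K ≤ Kmax := by omega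
    have hm : K + 1 ∈ Finset.Ioc l' (l + 1) := by
      simp only [Finset.mem_Ioc]; omega
    rw [ih hKK, sum_FF_succ Δx lam n l' l ξ K hm g (hg (K + 1) hm hK1)]
    rw [show K + 1 - l' = (K - l') + 1 by omega, pow_succ]
    ring

lemma sum_FF_top : ∑ s : SS l' l, FF Δx lam n l' l ξ (l + 1) s = (2 : ℝ) ^ (l + 1 - l') := by
  have h1 : ∀ s : SS l' l, FF Δx lam n l' l ξ (l + 1) s = 1 := by
    intro s; unfold FF; rw [Finset.Ioc_self, Finset.prod_empty]
  rw [Finset.sum_congr rfl (fun s _ => h1 s), Finset.sum_const, nsmul_eq_mul, mul_one]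
  have hcard : Fintype.card (SS l' l) = 2 ^ (l + 1 - l') := by
    rw [Fintype.card_fun, Fintype.card_bool, Fintype.card_coe, Nat.card_Ioc]
  rw [Finset.card_univ, hcard]
  push_cast
  ring

lemma pathIdx_parity (hodd : (n + (l : ℤ) + 1) % 2 = 1) (s : SS l' l) (k : ℕ)
    (hk : l' ≤ k) (hkl : k ≤ l + 1) :
    (pathIdx n l' l s k + (k : ℤ)) % 2 = 1 := by
  apply zmod2_cast
  push_cast
  unfold pathIdx
  have hterm : ∀ k' ∈ Finset.Ioc k (l + 1), ((stepVal l' l s k' : ℤ) : ZMod 2) = 1 := by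
    intro k' hk'
    have hmem : k' ∈ Finset.Ioc l' (l + 1) := by
      simp only [Finset.mem_Ioc] at *; omega
    rw [stepVal_eq l' l s k' hmem]
    cases s ⟨k', hmem⟩ <;> simp <;> decide
  push_cast
  rw [Finset.sum_congr rfl hterm, Finset.sum_const, Nat.card_Ioc, nsmul_eq_mul, mul_one]
  have hcast : ((l + 1 - k : ℕ) : ZMod 2) = (l : ZMod 2) + 1 - (k : ZMod 2) := by
    rw [Nat.cast_sub hkl]
    push_cast
    ring
  rw [hcast]
  have hn : ((n + (l : ℤ) + 1 : ℤ) : ZMod 2) = 1 := zmod2_of _ hodd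
  push_cast at hn
  have h2 : (2 : ZMod 2) = 0 := by decide
  linear_combination hn + ((k : ZMod 2) - (l : ZMod 2) - 1) * h2

lemma fac_nonneg (hlam : 0 < lam) (hξ : ∀ (x : ℝ) (k : ℕ), ξ x k ∈ Set.Icc (-lam⁻¹) lam⁻¹)
    (s : SS l' l) (k : ℕ) : 0 ≤ fac Δx lam n l' l ξ s k := by
  unfold fac
  have h1 := (hξ (pathPos Δx n l' l s k) k).1
  have h2 := (hξ (pathPos Δx n l' l s k) k).2
  have hinv : lam * lam⁻¹ = 1 := mul_inv_cancel₀ (ne_of_gt hlam)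
  unfold stepVal
  split
  · next h => cases s ⟨k, h⟩ <;> push_cast <;> norm_num <;> nlinarith
  · push_cast
    nlinarith

lemma FF_nonneg (hlam : 0 < lam) (hξ : ∀ (x : ℝ) (k : ℕ), ξ x k ∈ Set.Icc (-lam⁻¹) lam⁻¹)
    (k : ℕ) (s : SS l' l) : 0 ≤ FF Δx lam n l' l ξ k s := by
  unfold FF
  exact Finset.prod_nonneg (fun k' _ => fac_nonneg Δx lam n l' l ξ hlam hξ s k')

lemma walkExp_eq_sum (f : SS l' l → ℝ) :
    walkExp Δx lam n l' l ξ f = ∑ s : SS l' l, FF Δx lam n l' l ξ l' s * f s := rfl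

lemma walkExp_one (hl' : l' < l + 1) :
    walkExp Δx lam n l' l ξ (fun _ => 1) = 1 := by
  rw [walkExp_eq_sum]
  rw [sum_FF_of_indep Δx lam n l' l ξ (l + 1) (le_refl _) (fun _ => 1)
    (fun _ _ _ _ _ => rfl) (l + 1) (by omega) (le_refl _)]
  have h1 : ∑ s : SS l' l, FF Δx lam n l' l ξ (l + 1) s * 1
      = ∑ s : SS l' l, FF Δx lam n l' l ξ (l + 1) s := by
    apply Finset.sum_congr rfl; intro s _; ring
  rw [h1, sum_FF_top, one_div, inv_pow, inv_mul_cancel₀ (by positivity)]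

lemma walkExp_decomp (X : SS l' l → ℝ) (m b : ℝ) :
    walkExp Δx lam n l' l ξ (fun s => (X s - m) ^ 2)
      = walkExp Δx lam n l' l ξ (fun s => (X s - b) ^ 2)
        + 2 * (b - m) * walkExp Δx lam n l' l ξ X
        - ((b - m) * (m + b)) * walkExp Δx lam n l' l ξ (fun _ => 1) := by
  unfold walkExp
  rw [Finset.mul_sum, Finset.mul_sum, ← Finset.sum_add_distrib, ← Finset.sum_sub_distrib]
  apply Finset.sum_congr rfl
  intro s _
  ring

end St5Aux

set_option maxHeartbeats 1600000 in
/-- Proposition 3.2(2): if the control `ξ` satisfies the Lipschitz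
condition `|ξ^k_{m+1} − ξ^k_*| ≤ θ |x_{m+1} − γ̄^k|` at the averaged path
`γ̄^k = E[γ^k]`, where `ξ^k_*` is the linear interpolation of `ξ` at `γ̄^k`, then
`σ^k = E[|γ^k − γ̄^k|²] ≤ (e^{4θ(t_{l+1} − t_k)}/(4θλ))·Δx` for `l' ≤ k ≤ l+1`. -/
theorem statement5
    (Δx Δt lam : ℝ) (hΔx : 0 < Δx) (hΔt : 0 < Δt) (hlam : lam = Δt / Δx)
    (n : ℤ) (l' l : ℕ) (hl' : l' < l + 1)
    (hodd : (n + (l : ℤ) + 1) % 2 = 1)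
    (ξ : ℝ → ℕ → ℝ) (hξ : ∀ (x : ℝ) (k : ℕ), ξ x k ∈ Set.Icc (-lam⁻¹) lam⁻¹)
    (θ : ℝ) (hθ : 0 < θ)
    -- the averaged path γ̄
    (gbar : ℕ → ℝ)
    (hgbar : ∀ k : ℕ, gbar k = walkExp Δx lam n l' l ξ (fun s => pathPos Δx n l' l s k))
    -- the interpolated control ξ^k_* at the averaged path
    (xistar : ℕ → ℝ)
    (hxistar : ∀ k : ℕ, xistar k
      = ξ ((mIdx Δx k (gbar k) : ℝ) * Δx) k
        + (ξ (((mIdx Δx k (gbar k) : ℝ) + 2) * Δx) k - ξ ((mIdx Δx k (gbar k) : ℝ) * Δx) k)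
            / (2 * Δx) * (gbar k - (mIdx Δx k (gbar k) : ℝ) * Δx))
    -- the Lipschitz condition at the averaged path
    (hLip : ∀ (k : ℕ) (m : ℤ), l' ≤ k → k ≤ l + 1 → (m + (k : ℤ)) % 2 = 1 →
      |ξ ((m : ℝ) * Δx) k - xistar k| ≤ θ * |(m : ℝ) * Δx - gbar k|) :
    ∀ k : ℕ, l' ≤ k → k ≤ l + 1 →
      walkExp Δx lam n l' l ξ (fun s => (pathPos Δx n l' l s k - gbar k) ^ 2)
        ≤ Real.exp (4 * θ * (((l : ℝ) + 1) * Δt - (k : ℝ) * Δt)) / (4 * θ * lam) * Δx := by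
  have hlam0 : 0 < lam := by rw [hlam]; positivity
  have hΔx0 : Δx ≠ 0 := ne_of_gt hΔx
  have hld : lam * Δx = Δt := by rw [hlam]; field_simp
  set r : ℝ := Real.exp (2 * θ * Δt) with hr
  have hrpos : 0 < r := Real.exp_pos _
  have hone := St5Aux.walkExp_one Δx lam n l' l ξ hl'
  set σ : ℕ → ℝ :=
    fun k => walkExp Δx lam n l' l ξ (fun s => (pathPos Δx n l' l s k - gbar k) ^ 2) with hσdef
  -- the one-step recursion
  have recur : ∀ k, l' ≤ k → k ≤ l → σ k ≤ r * σ (k + 1) + Δx ^ 2 := by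
    intro k hk hkl
    have hm : k + 1 ∈ Finset.Ioc l' (l + 1) := by simp only [Finset.mem_Ioc]; omega
    set b : ℝ := gbar (k + 1) - Δt * xistar (k + 1) with hb
    -- Step A : variance is minimal around the mean
    have stepA : σ k ≤ walkExp Δx lam n l' l ξ (fun s => (pathPos Δx n l' l s k - b) ^ 2) := by
      have hdec := St5Aux.walkExp_decomp Δx lam n l' l ξ
        (fun s => pathPos Δx n l' l s k) (gbar k) b
      rw [hone, ← hgbar k] at hdec
      have key : 2 * (b - gbar k) * gbar k - (b - gbar k) * (gbar k + b) * 1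
          = -(b - gbar k) ^ 2 := by ring
      simp only [hσdef]
      linarith [hdec, key, sq_nonneg (b - gbar k)]
    -- Step B : reduce to the partial sum at level k
    have stepB : walkExp Δx lam n l' l ξ (fun s => (pathPos Δx n l' l s k - b) ^ 2)
        = (1 / 2 : ℝ) ^ (k - l') * ∑ s : St5Aux.SS l' l,
            St5Aux.FF Δx lam n l' l ξ k s * (pathPos Δx n l' l s k - b) ^ 2 := by
      rw [St5Aux.walkExp_eq_sum]
      exact St5Aux.sum_FF_of_indep Δx lam n l' l ξ k (by omega)
        (fun s => (pathPos Δx n l' l s k - b) ^ 2)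
        (fun k0 hk0 hle s b' =>
          congrArg (fun y => (y - b) ^ 2) (St5Aux.pathPos_update Δx n l' l s ⟨k0, hk0⟩ b' k hle)) k hk
        (le_refl k)
    -- Step C : one-step conditional expectation
    have hpos : ∀ s : St5Aux.SS l' l, pathPos Δx n l' l s k
        = pathPos Δx n l' l s (k + 1) - (stepVal l' l s (k + 1) : ℝ) * Δx := by
      intro s
      unfold pathPos pathIdx
      rw [← Finset.sum_Ioc_consecutive _ (Nat.le_succ k) (show k + 1 ≤ l + 1 by omega),
        Nat.Ioc_succ_singleton, Finset.sum_singleton]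
      push_cast
      ring
    have hsq : ∀ s : St5Aux.SS l' l,
        ((stepVal l' l s (k + 1) : ℤ) : ℝ) * ((stepVal l' l s (k + 1) : ℤ) : ℝ) = 1 := by
      intro s
      rw [St5Aux.stepVal_eq l' l s (k + 1) hm]
      cases s ⟨k + 1, hm⟩ <;> norm_num
    have hptw : ∀ s : St5Aux.SS l' l,
        St5Aux.FF Δx lam n l' l ξ k s * (pathPos Δx n l' l s k - b) ^ 2
        = St5Aux.fac Δx lam n l' l ξ s (k + 1)
            * (((pathPos Δx n l' l s (k + 1) - b) ^ 2 + Δx ^ 2)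
                * St5Aux.FF Δx lam n l' l ξ (k + 1) s)
          + St5Aux.fac Δx lam n l' l ξ s (k + 1)
            * ((stepVal l' l s (k + 1) : ℝ)
                * ((-2 * Δx * (pathPos Δx n l' l s (k + 1) - b))
                    * St5Aux.FF Δx lam n l' l ξ (k + 1) s)) := by
      intro s
      rw [St5Aux.FF_succ Δx lam n l' l ξ k (by omega) s, hpos s]
      linear_combination (St5Aux.fac Δx lam n l' l ξ s (k + 1)
        * St5Aux.FF Δx lam n l' l ξ (k + 1) s * Δx ^ 2) * hsq s
    have hsum1 : ∑ s : St5Aux.SS l' l, St5Aux.fac Δx lam n l' l ξ s (k + 1)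
          * (((pathPos Δx n l' l s (k + 1) - b) ^ 2 + Δx ^ 2)
              * St5Aux.FF Δx lam n l' l ξ (k + 1) s)
        = (1 / 2) * ∑ s : St5Aux.SS l' l,
            ((pathPos Δx n l' l s (k + 1) - b) ^ 2 + Δx ^ 2)
              * St5Aux.FF Δx lam n l' l ξ (k + 1) s := by
      apply St5Aux.sum_fac_const Δx lam n l' l ξ (k + 1) hm
      intro s b'
      simp only [St5Aux.pathPos_update Δx n l' l s ⟨k + 1, hm⟩ b' (k + 1) (le_refl _),
        St5Aux.FF_update Δx lam n l' l ξ s ⟨k + 1, hm⟩ b' (k + 1) (le_refl _)]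
    have hsum2 : ∑ s : St5Aux.SS l' l, St5Aux.fac Δx lam n l' l ξ s (k + 1)
          * ((stepVal l' l s (k + 1) : ℝ)
              * ((-2 * Δx * (pathPos Δx n l' l s (k + 1) - b))
                  * St5Aux.FF Δx lam n l' l ξ (k + 1) s))
        = ∑ s : St5Aux.SS l' l, (lam / 2) * (ξ (pathPos Δx n l' l s (k + 1)) (k + 1)
            * ((-2 * Δx * (pathPos Δx n l' l s (k + 1) - b))
                * St5Aux.FF Δx lam n l' l ξ (k + 1) s)) := by
      apply St5Aux.sum_fac_step Δx lam n l' l ξ (k + 1) hm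
      intro s b'
      simp only [St5Aux.pathPos_update Δx n l' l s ⟨k + 1, hm⟩ b' (k + 1) (le_refl _),
        St5Aux.FF_update Δx lam n l' l ξ s ⟨k + 1, hm⟩ b' (k + 1) (le_refl _)]
    have stepC : ∑ s : St5Aux.SS l' l,
          St5Aux.FF Δx lam n l' l ξ k s * (pathPos Δx n l' l s k - b) ^ 2
        = (1 / 2) * ∑ s : St5Aux.SS l' l, St5Aux.FF Δx lam n l' l ξ (k + 1) s
            * ((pathPos Δx n l' l s (k + 1) - b) ^ 2 + Δx ^ 2
                - 2 * Δt * (ξ (pathPos Δx n l' l s (k + 1)) (k + 1)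
                    * (pathPos Δx n l' l s (k + 1) - b))) := by
      rw [Finset.sum_congr rfl (fun s _ => hptw s), Finset.sum_add_distrib, hsum1, hsum2]
      rw [Finset.mul_sum, Finset.mul_sum, ← Finset.sum_add_distrib]
      apply Finset.sum_congr rfl
      intro s _
      linear_combination (-(ξ (pathPos Δx n l' l s (k + 1)) (k + 1)
        * (pathPos Δx n l' l s (k + 1) - b)
        * St5Aux.FF Δx lam n l' l ξ (k + 1) s)) * hld
    -- Step D : pointwise bound using the Lipschitz hypothesis
    have hexp2 : (1 + θ * Δt) ^ 2 ≤ r := by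
      have h1 : 1 + θ * Δt ≤ Real.exp (θ * Δt) := by
        have := Real.add_one_le_exp (θ * Δt); linarith
      have h0 : (0:ℝ) ≤ 1 + θ * Δt := by positivity
      have h2 : r = Real.exp (θ * Δt) * Real.exp (θ * Δt) := by
        rw [hr, ← Real.exp_add]; ring_nf
      rw [h2, sq]
      exact mul_le_mul h1 h1 h0 (Real.exp_pos _).le
    have stepD : ∀ s : St5Aux.SS l' l,
        (pathPos Δx n l' l s (k + 1) - b) ^ 2 + Δx ^ 2
            - 2 * Δt * (ξ (pathPos Δx n l' l s (k + 1)) (k + 1)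
                * (pathPos Δx n l' l s (k + 1) - b))
          ≤ r * (pathPos Δx n l' l s (k + 1) - gbar (k + 1)) ^ 2 + Δx ^ 2 := by
      intro s
      have hpar : (pathIdx n l' l s (k + 1) + ((k + 1 : ℕ) : ℤ)) % 2 = 1 :=
        St5Aux.pathIdx_parity n l' l hodd s (k + 1) (by omega) (by omega)
      have hL := hLip (k + 1) (pathIdx n l' l s (k + 1)) (by omega) (by omega) hpar
      have hppos : pathPos Δx n l' l s (k + 1)
          = ((pathIdx n l' l s (k + 1) : ℤ) : ℝ) * Δx := rfl
      rw [← hppos] at hL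
      set P : ℝ := pathPos Δx n l' l s (k + 1)
      set G : ℝ := gbar (k + 1)
      set xv : ℝ := ξ P (k + 1)
      set xs : ℝ := xistar (k + 1)
      -- hL : |xv - xs| ≤ θ * |P - G|
      have habs1 : (xv - xs) ^ 2 ≤ θ ^ 2 * (P - G) ^ 2 := by
        have h1 := mul_self_le_mul_self (abs_nonneg (xv - xs)) hL
        nlinarith [sq_abs (xv - xs), sq_abs (P - G)]
      have habs2 : -((xv - xs) * (P - G)) ≤ θ * (P - G) ^ 2 := by
        have h1 : -((xv - xs) * (P - G)) ≤ |xv - xs| * |P - G| := by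
          rw [← abs_mul]; exact neg_le_abs _
        have h2 : |xv - xs| * |P - G| ≤ (θ * |P - G|) * |P - G| :=
          mul_le_mul_of_nonneg_right hL (abs_nonneg _)
        nlinarith [abs_mul_abs_self (P - G)]
      have hC := mul_le_mul_of_nonneg_right hexp2 (sq_nonneg (P - G))
      have hA := mul_le_mul_of_nonneg_left habs2 (by linarith : (0:ℝ) ≤ 2 * Δt)
      have hB := mul_le_mul_of_nonneg_left habs1 (sq_nonneg Δt)
      have hD := sq_nonneg (Δt * xv)
      rw [hb]
      nlinarith [hA, hB, hC, hD]
    -- Steps E, F : assemble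
    have hFFpos : ∀ s : St5Aux.SS l' l, 0 ≤ St5Aux.FF Δx lam n l' l ξ (k + 1) s :=
      fun s => St5Aux.FF_nonneg Δx lam n l' l ξ hlam0 hξ (k + 1) s
    set S1 : ℝ := ∑ s : St5Aux.SS l' l, St5Aux.FF Δx lam n l' l ξ (k + 1) s
      * (pathPos Δx n l' l s (k + 1) - gbar (k + 1)) ^ 2 with hS1
    set S2 : ℝ := ∑ s : St5Aux.SS l' l, St5Aux.FF Δx lam n l' l ξ (k + 1) s * 1 with hS2
    have stepE : ∑ s : St5Aux.SS l' l, St5Aux.FF Δx lam n l' l ξ (k + 1) s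
          * ((pathPos Δx n l' l s (k + 1) - b) ^ 2 + Δx ^ 2
              - 2 * Δt * (ξ (pathPos Δx n l' l s (k + 1)) (k + 1)
                  * (pathPos Δx n l' l s (k + 1) - b)))
        ≤ r * S1 + Δx ^ 2 * S2 := by
      have h1 : ∑ s : St5Aux.SS l' l, St5Aux.FF Δx lam n l' l ξ (k + 1) s
            * ((pathPos Δx n l' l s (k + 1) - b) ^ 2 + Δx ^ 2
                - 2 * Δt * (ξ (pathPos Δx n l' l s (k + 1)) (k + 1)
                    * (pathPos Δx n l' l s (k + 1) - b)))
          ≤ ∑ s : St5Aux.SS l' l, St5Aux.FF Δx lam n l' l ξ (k + 1) s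
              * (r * (pathPos Δx n l' l s (k + 1) - gbar (k + 1)) ^ 2 + Δx ^ 2) :=
        Finset.sum_le_sum (fun s _ => mul_le_mul_of_nonneg_left (stepD s) (hFFpos s))
      have h2 : ∑ s : St5Aux.SS l' l, St5Aux.FF Δx lam n l' l ξ (k + 1) s
            * (r * (pathPos Δx n l' l s (k + 1) - gbar (k + 1)) ^ 2 + Δx ^ 2)
          = r * S1 + Δx ^ 2 * S2 := by
        rw [hS1, hS2, Finset.mul_sum, Finset.mul_sum, ← Finset.sum_add_distrib]
        exact Finset.sum_congr rfl (fun s _ => by ring)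
      linarith [h1, h2.le, h2.ge]
    have hσ1 : σ (k + 1) = (1 / 2 : ℝ) ^ (k + 1 - l') * S1 := by
      simp only [hσdef, hS1]
      rw [St5Aux.walkExp_eq_sum]
      exact St5Aux.sum_FF_of_indep Δx lam n l' l ξ (k + 1) (by omega)
        (fun s => (pathPos Δx n l' l s (k + 1) - gbar (k + 1)) ^ 2)
        (fun k0 hk0 hle s b' =>
          congrArg (fun y => (y - gbar (k + 1)) ^ 2)
            (St5Aux.pathPos_update Δx n l' l s ⟨k0, hk0⟩ b' (k + 1) hle)) (k + 1) (by omega) (le_refl _)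
    have hone1 : (1 : ℝ) = (1 / 2 : ℝ) ^ (k + 1 - l') * S2 := by
      have h : ∑ s : St5Aux.SS l' l, St5Aux.FF Δx lam n l' l ξ l' s * 1
          = (1 / 2 : ℝ) ^ (k + 1 - l') * ∑ s : St5Aux.SS l' l,
              St5Aux.FF Δx lam n l' l ξ (k + 1) s * 1 :=
        St5Aux.sum_FF_of_indep Δx lam n l' l ξ (k + 1) (by omega) (fun _ => 1)
          (fun _ _ _ _ _ => rfl) (k + 1) (by omega) (le_refl _)
      have h1 : ∑ s : St5Aux.SS l' l, St5Aux.FF Δx lam n l' l ξ l' s * 1 = 1 := hone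
      rw [hS2, ← h, h1]
    have hpow : (1 / 2 : ℝ) ^ (k - l') * (1 / 2) = (1 / 2 : ℝ) ^ (k + 1 - l') := by
      rw [show k + 1 - l' = (k - l') + 1 by omega, pow_succ]
    have hhalfpos : (0:ℝ) ≤ (1 / 2 : ℝ) ^ (k - l') * (1 / 2) := by positivity
    calc σ k ≤ walkExp Δx lam n l' l ξ (fun s => (pathPos Δx n l' l s k - b) ^ 2) := stepA
      _ = (1 / 2 : ℝ) ^ (k - l') * ∑ s : St5Aux.SS l' l,
            St5Aux.FF Δx lam n l' l ξ k s * (pathPos Δx n l' l s k - b) ^ 2 := stepB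
      _ = (1 / 2 : ℝ) ^ (k - l') * ((1 / 2) * ∑ s : St5Aux.SS l' l,
            St5Aux.FF Δx lam n l' l ξ (k + 1) s
            * ((pathPos Δx n l' l s (k + 1) - b) ^ 2 + Δx ^ 2
                - 2 * Δt * (ξ (pathPos Δx n l' l s (k + 1)) (k + 1)
                    * (pathPos Δx n l' l s (k + 1) - b)))) := by rw [stepC]
      _ ≤ (1 / 2 : ℝ) ^ (k - l') * (1 / 2) * (r * S1 + Δx ^ 2 * S2) := by
          rw [mul_assoc]
          exact mul_le_mul_of_nonneg_left
            (mul_le_mul_of_nonneg_left stepE (by norm_num)) (by positivity)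
      _ = r * ((1 / 2 : ℝ) ^ (k + 1 - l') * S1)
            + Δx ^ 2 * ((1 / 2 : ℝ) ^ (k + 1 - l') * S2) := by rw [← hpow]; ring
      _ = r * σ (k + 1) + Δx ^ 2 := by rw [← hσ1, ← hone1, mul_one]
  -- top level : zero variance at k = l+1
  have hσtop : σ (l + 1) = 0 := by
    have hpos1 : ∀ s : St5Aux.SS l' l, pathPos Δx n l' l s (l + 1) = (n : ℝ) * Δx := by
      intro s
      unfold pathPos pathIdx
      rw [Finset.Ioc_self, Finset.sum_empty]
      push_cast
      ring
    have hg1 : gbar (l + 1) = (n : ℝ) * Δx := by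
      rw [hgbar (l + 1)]
      unfold walkExp
      calc ∑ s : St5Aux.SS l' l, pathProb Δx lam n l' l ξ s * pathPos Δx n l' l s (l + 1)
          = ∑ s : St5Aux.SS l' l, pathProb Δx lam n l' l ξ s * 1 * ((n : ℝ) * Δx) := by
            exact Finset.sum_congr rfl (fun s _ => by rw [hpos1 s]; ring)
        _ = (∑ s : St5Aux.SS l' l, pathProb Δx lam n l' l ξ s * 1) * ((n : ℝ) * Δx) := by
            rw [Finset.sum_mul]
        _ = (n : ℝ) * Δx := by rw [show (∑ s : St5Aux.SS l' l,
              pathProb Δx lam n l' l ξ s * 1) = 1 from hone, one_mul]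
    simp only [hσdef]
    unfold walkExp
    apply Finset.sum_eq_zero
    intro s _
    simp only [hpos1 s, hg1]
    ring
  -- main induction
  have main : ∀ j k, l' ≤ k → l + 1 = k + j →
      σ k ≤ Δx ^ 2 * ∑ i ∈ Finset.range j, r ^ i := by
    intro j
    induction j with
    | zero =>
      intro k hk hj
      have hkk : k = l + 1 := by omega
      rw [hkk, hσtop]
      simp
    | succ j ih =>
      intro k hk hj
      have h1 := recur k hk (by omega)
      have h2 := ih (k + 1) (by omega) (by omega)
      have h3 := mul_le_mul_of_nonneg_left h2 hrpos.le
      have hgeom : ∑ i ∈ Finset.range (j + 1), r ^ i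
          = r * ∑ i ∈ Finset.range j, r ^ i + 1 := geom_sum_succ
      calc σ k ≤ r * σ (k + 1) + Δx ^ 2 := h1
        _ ≤ r * (Δx ^ 2 * ∑ i ∈ Finset.range j, r ^ i) + Δx ^ 2 := by linarith
        _ = Δx ^ 2 * ∑ i ∈ Finset.range (j + 1), r ^ i := by rw [hgeom]; ring
  -- conclusion
  intro k hk hkl
  suffices hs : σ k ≤ Real.exp (4 * θ * (((l : ℝ) + 1) * Δt - (k : ℝ) * Δt)) / (4 * θ * lam) * Δx
    from hs
  set j : ℕ := l + 1 - k with hj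
  have hmain := main j k hk (by omega)
  set u : ℝ := 2 * θ * Δt with hu
  have hupos : 0 < u := by rw [hu]; positivity
  have hru : r = Real.exp u := by rw [hr, hu]
  have hr1 : u ≤ r - 1 := by
    have := Real.add_one_le_exp u
    rw [hru]; linarith
  have hrgt : 1 < r := by linarith
  have hrj1 : 1 ≤ r ^ j := one_le_pow₀ hrgt.le
  have hgeq : ∑ i ∈ Finset.range j, r ^ i = (r ^ j - 1) / (r - 1) :=
    geom_sum_eq (ne_of_gt hrgt) j
  have hb12 : (r ^ j - 1) / (r - 1) ≤ (r ^ j) ^ 2 / (2 * u) := by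
    rw [div_le_div_iff₀ (by linarith) (by positivity)]
    nlinarith [sq_nonneg (r ^ j - 1), mul_le_mul_of_nonneg_left hr1
      (by linarith : (0:ℝ) ≤ 2 * (r ^ j - 1))]
  have hcast : (j : ℝ) = (l : ℝ) + 1 - (k : ℝ) := by
    rw [hj]
    push_cast [Nat.cast_sub hkl]
    ring
  have hexpj : (r ^ j) ^ 2 = Real.exp (4 * θ * (((l : ℝ) + 1) * Δt - (k : ℝ) * Δt)) := by
    rw [hru, ← Real.exp_nat_mul, sq, ← Real.exp_add, hcast, hu]
    congr 1
    ring
  have hfinal : (r ^ j) ^ 2 * Δx ^ 2 / (4 * θ * Δt)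
      = Real.exp (4 * θ * (((l : ℝ) + 1) * Δt - (k : ℝ) * Δt)) / (4 * θ * lam) * Δx := by
    rw [← hexpj, hlam]
    field_simp
  have hchain : Δx ^ 2 * ∑ i ∈ Finset.range j, r ^ i ≤ (r ^ j) ^ 2 * Δx ^ 2 / (4 * θ * Δt) := by
    rw [hgeq]
    calc Δx ^ 2 * ((r ^ j - 1) / (r - 1)) ≤ Δx ^ 2 * ((r ^ j) ^ 2 / (2 * u)) :=
        mul_le_mul_of_nonneg_left hb12 (sq_nonneg Δx)
      _ = (r ^ j) ^ 2 * Δx ^ 2 / (4 * θ * Δt) := by rw [hu]; ring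
  rw [← hfinal]
  exact le_trans hmain hchain
end

section
/- Second half of Proposition 4.1 (a calibrated heteroclinic chain forces the reverse Peierls-barrier inequality): Let ℓ : ℝ×ℝ×ℝ → ℝ be continuous and ℤ²-periodic in its first two arguments, h ∈ ℝ, and let v̄ : ℝ² → ℝ be continuous, ℤ²-periodic, and satisfy the backward Lax–Oleinik variational property. Let q ∈ ℕ, b ∈ ℤ with |b| < q, y, τ, z ∈ ℝ, k ≥ 1, and x₁, …, x_k ∈ ℝ. Suppose there exist curves γ₀ : (−∞,τ] → ℝ and γ₁, …, γ_k : ℝ → ℝ, all Lipschitz with a common Lipschitz constant, which are calibrated for v̄ (i.e., for each j and each compact interval [a₁,a₂] in the domain of γ_j, v̄(γ_j(a₂),a₂) = ∫_{a₁}^{a₂} ℓ(γ_j(s),s,γ_j'(s)) ds + h·(a₂−a₁) + v̄(γ_j(a₁),a₁)), with γ₀(τ) = y, and with the following asymptotics as ℤ ∋ a → ∓∞, where d_𝕋(u,w) := min_{j∈ℤ} |u − w − j|: d_𝕋(γ₀(aq), x₁) → 0 as a → −∞; for j = 1, …, k−1: d_𝕋(γ_j(aq), x_{j+1}) → 0 as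 a → −∞ and d_𝕋(γ_j(aq), x_j) → 0 as a → +∞; d_𝕋(γ_k(aq+b), z) → 0 as a → −∞ and d_𝕋(γ_k(aq), x_k) → 0 as a → +∞. Then h_p(z,0;y,τ) ≤ v̄(y,τ) − v̄(z,0). -/
/-!
Cut each calibrated curve `γ_k, …, γ₁, γ₀` at integer times where it is close, modulo `ℤ`, to the
next connecting point, move the pieces by integer translations in space and time so that they
match up to small jumps, and absorb each jump by a perturbation over a unit time interval. This
gives curves from `z + ℤ` at arbitrarily early integer times to `(y, τ)`. Along calibrated pieces
the action telescopes, so these curves have action `v̄(y,τ) − v̄(z,0)` up to an error controlled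
by the uniform continuity of `ℓ` and `v̄`. The Lax–Oleinik identity bounds every competing action
from below by the same quantity, so the infima are bounded below and their `liminf` is at most the
action of these curves.
-/

open MeasureTheory intervalIntegral

/-- The distance on the circle ℝ/ℤ: `d_𝕋(u,w) = min_{j ∈ ℤ} |u − w − j|`. -/
noncomputable def torusDist (u w : ℝ) : ℝ := |u - w - (round (u - w) : ℝ)|

open Filter Set Topology
open scoped Interval

lemma torusDist_add_int (u w : ℝ) (m : ℤ) : torusDist (u + m) w = torusDist u w := by
  simp only [torusDist, show u + m - w = u - w + m by ring, round_add_intCast, Int.cast_add]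
  ring_nf

lemma exists_int_abs_add_sub_le_of_torusDist_le {u u' w a b : ℝ} (hu : torusDist u w ≤ a)
    (hu' : torusDist u' w ≤ b) : ∃ m : ℤ, |u + m - u'| ≤ a + b := by
  refine ⟨round (u' - w) - round (u - w), ?_⟩
  calc |u + ↑(round (u' - w) - round (u - w)) - u'|
      = |(u - w - round (u - w)) - (u' - w - round (u' - w))| := by push_cast; ring_nf
    _ ≤ a + b := (abs_sub _ _).trans (add_le_add hu hu')

lemma intervalIntegral.integral_congr_uIoc {f g : ℝ → ℝ} {a b : ℝ} (hfg : EqOn f g (Ι a b)) :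
    ∫ x in a..b, f x = ∫ x in a..b, g x :=
  integral_congr_ae (.of_forall fun _ hx => hfg hx)

lemma LipschitzWith.add_integral_deriv {γ : ℝ → ℝ} {L : NNReal} (hγ : LipschitzWith L γ)
    (a b : ℝ) : γ a + ∫ s in a..b, deriv γ s = γ b := by
  rw [(hγ.lipschitzOnWith (s := uIcc a b)).absolutelyContinuousOnInterval.integral_deriv_eq_sub]
  ring

lemma abs_deriv_add_affine_sub_deriv_le (γ : ℝ → ℝ) (c Δ s : ℝ) :
    |deriv (fun s => γ s + (c - s) * Δ) s - deriv γ s| ≤ |Δ| := by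
  have haff : DifferentiableAt ℝ (fun s => (c - s) * Δ) s := by fun_prop
  by_cases hd : DifferentiableAt ℝ γ s
  · have hder : HasDerivAt (fun s => γ s + (c - s) * Δ) (deriv γ s + -1 * Δ) s :=
      hd.hasDerivAt.add (((hasDerivAt_id s).const_sub c).mul_const Δ)
    simp [hder.deriv]
  · have hd' : ¬DifferentiableAt ℝ (fun s => γ s + (c - s) * Δ) s := fun h' =>
      hd (by simpa using h'.fun_sub haff)
    simp [deriv_zero_of_not_differentiableAt hd, deriv_zero_of_not_differentiableAt hd']

lemma LipschitzOnWith.comp_min_Iic {γ : ℝ → ℝ} {L : NNReal} {c : ℝ}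
    (hγ : LipschitzOnWith L γ (Iic c)) : LipschitzWith L fun s => γ (min s c) := by
  simpa [Function.comp_def] using lipschitzOnWith_univ.mp
    (hγ.comp (LipschitzWith.id.min_const c).lipschitzOnWith fun s _ => min_le_right s c)

/-- Curves are encoded by their starting point and velocity, as in the Lax–Oleinik and Peierls
sets. -/
def Reachable (ℓ : ℝ → ℝ → ℝ → ℝ) (h t₀ t₁ p₀ p₁ C : ℝ) : Prop :=
  ∃ ρ : ℝ → ℝ, IntervalIntegrable ρ volume t₀ t₁ ∧ p₀ + ∫ s in t₀..t₁, ρ s = p₁ ∧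
    IntervalIntegrable (fun s => ℓ (p₀ + ∫ u in t₀..s, ρ u) s (ρ s)) volume t₀ t₁ ∧
    (∫ s in t₀..t₁, ℓ (p₀ + ∫ u in t₀..s, ρ u) s (ρ s)) + h * (t₁ - t₀) ≤ C

namespace Reachable

variable {ℓ : ℝ → ℝ → ℝ → ℝ} {h t₀ t₁ t₂ p₀ p₁ p₂ C C₁ C₂ : ℝ}

lemma mono (hr : Reachable ℓ h t₀ t₁ p₀ p₁ C₁) (hC : C₁ ≤ C₂) : Reachable ℓ h t₀ t₁ p₀ p₁ C₂ :=
  let ⟨ρ, hρ, hp, hi, hc⟩ := hr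
  ⟨ρ, hρ, hp, hi, hc.trans hC⟩

lemma trans (h01 : t₀ ≤ t₁) (h12 : t₁ ≤ t₂) (r₁ : Reachable ℓ h t₀ t₁ p₀ p₁ C₁)
    (r₂ : Reachable ℓ h t₁ t₂ p₁ p₂ C₂) : Reachable ℓ h t₀ t₂ p₀ p₂ (C₁ + C₂) := by
  obtain ⟨ρ₁, hρ₁, hp₁, hi₁, hc₁⟩ := r₁
  obtain ⟨ρ₂, hρ₂, hp₂, hi₂, hc₂⟩ := r₂
  set ρ : ℝ → ℝ := fun s => if s ≤ t₁ then ρ₁ s else ρ₂ s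
  have eq₁ : ∀ s ≤ t₁, EqOn ρ ρ₁ (Ι t₀ s) := fun s hs u hu => if_pos (hu.2.trans (max_le h01 hs))
  have eq₂ : ∀ s ≥ t₁, EqOn ρ ρ₂ (Ι t₁ s) := fun s hs u hu =>
    if_neg (not_le.mpr ((le_min le_rfl hs).trans_lt hu.1))
  have hρ₁' : IntervalIntegrable ρ volume t₀ t₁ :=
    (intervalIntegrable_congr (eq₁ t₁ le_rfl).symm).mp hρ₁
  have hρ₂' : ∀ s ∈ Icc t₁ t₂, IntervalIntegrable ρ volume t₁ s := fun s hs =>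
    (intervalIntegrable_congr (eq₂ s hs.1).symm).mp
      (hρ₂.mono_set (by simpa [uIcc_of_le h12, uIcc_of_le hs.1] using Icc_subset_Icc_right hs.2))
  have pos₂ : ∀ s ∈ Icc t₁ t₂, p₀ + ∫ u in t₀..s, ρ u = p₁ + ∫ u in t₁..s, ρ₂ u := by
    intro s hs
    rw [← integral_add_adjacent_intervals hρ₁' (hρ₂' s hs), integral_congr_uIoc (eq₁ t₁ le_rfl),
      integral_congr_uIoc (eq₂ s hs.1), ← hp₁, add_assoc]
  have hF₁ : EqOn (fun s => ℓ (p₀ + ∫ u in t₀..s, ρ u) s (ρ s))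
      (fun s => ℓ (p₀ + ∫ u in t₀..s, ρ₁ u) s (ρ₁ s)) (Ι t₀ t₁) := fun s hs => by
    simp only [integral_congr_uIoc (eq₁ s (hs.2.trans (max_le h01 le_rfl))), eq₁ t₁ le_rfl hs]
  have hF₂ : EqOn (fun s => ℓ (p₀ + ∫ u in t₀..s, ρ u) s (ρ s))
      (fun s => ℓ (p₁ + ∫ u in t₁..s, ρ₂ u) s (ρ₂ s)) (Ι t₁ t₂) := fun s hs => by
    simp only [pos₂ s (Ioc_subset_Icc_self (uIoc_of_le h12 ▸ hs)), eq₂ t₂ h12 hs]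
  have hi₁' := (intervalIntegrable_congr hF₁.symm).mp hi₁
  have hi₂' := (intervalIntegrable_congr hF₂.symm).mp hi₂
  refine ⟨ρ, hρ₁'.trans (hρ₂' t₂ ⟨h12, le_rfl⟩), by rw [pos₂ t₂ ⟨h12, le_rfl⟩, hp₂],
    hi₁'.trans hi₂', ?_⟩
  rw [← integral_add_adjacent_intervals hi₁' hi₂', integral_congr_uIoc hF₁,
    integral_congr_uIoc hF₂]
  linarith

end Reachable

structure IsPeriodicLagrangian (ℓ : ℝ → ℝ → ℝ → ℝ) : Prop where
  continuous : Continuous fun q : ℝ × ℝ × ℝ => ℓ q.1 q.2.1 q.2.2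
  periodic : ∀ x t ξ : ℝ, ℓ (x + 1) t ξ = ℓ x t ξ ∧ ℓ x (t + 1) ξ = ℓ x t ξ

namespace IsPeriodicLagrangian

variable {ℓ : ℝ → ℝ → ℝ → ℝ} (hL : IsPeriodicLagrangian ℓ)
include hL

lemma add_int (x t ξ : ℝ) (m n : ℤ) : ℓ (x + m) (t + n) ξ = ℓ x t ξ := by
  have hx : Function.Periodic (fun x => ℓ x (t + n) ξ) 1 := fun x => (hL.periodic x _ ξ).1
  have ht : Function.Periodic (fun t => ℓ x t ξ) 1 := fun t => (hL.periodic x t ξ).2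
  calc ℓ (x + m) (t + n) ξ = ℓ x (t + n) ξ := by simpa using hx.int_mul m x
    _ = ℓ x t ξ := by simpa using ht.int_mul n t

lemma eq_fract_add (x t ξ u : ℝ) : ℓ (x + u) t ξ = ℓ (Int.fract x + u) (Int.fract t) ξ := by
  rw [← hL.add_int (Int.fract x + u) (Int.fract t) ξ ⌊x⌋ ⌊t⌋, Int.fract_add_floor,
    add_right_comm, Int.fract_add_floor]

lemma eq_fract (x t ξ : ℝ) : ℓ x t ξ = ℓ (Int.fract x) (Int.fract t) ξ := by
  simpa using hL.eq_fract_add x t ξ 0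

lemma exists_bound (B : ℝ) : ∃ M, ∀ x t ξ, |ξ| ≤ B → |ℓ x t ξ| ≤ M := by
  obtain ⟨M, hM⟩ := (isCompact_Icc.prod (isCompact_Icc.prod isCompact_Icc) :
    IsCompact (Icc (0 : ℝ) 1 ×ˢ Icc (0 : ℝ) 1 ×ˢ Icc (-B) B)).exists_bound_of_continuousOn
    hL.continuous.continuousOn
  refine ⟨M, fun x t ξ hξ => ?_⟩
  rw [hL.eq_fract]
  exact hM (Int.fract x, Int.fract t, ξ)
    ⟨⟨Int.fract_nonneg x, (Int.fract_lt_one x).le⟩, ⟨Int.fract_nonneg t, (Int.fract_lt_one t).le⟩,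
      abs_le.mp hξ⟩

lemma exists_abs_sub_le (B : ℝ) {η : ℝ} (hη : 0 < η) :
    ∃ δ > 0, ∀ x t ξ u Δ, |ξ| ≤ B → |u| ≤ δ → |Δ| ≤ δ → |ℓ (x + u) t (ξ + Δ) - ℓ x t ξ| ≤ η := by
  set K : Set (ℝ × ℝ × ℝ) := Icc (-1) 2 ×ˢ Icc 0 1 ×ˢ Icc (-B - 1) (B + 1)
  have hK : IsCompact K := isCompact_Icc.prod (isCompact_Icc.prod isCompact_Icc)
  obtain ⟨δ, hδ, hδK⟩ := Metric.uniformContinuousOn_iff_le.mp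
    (hK.uniformContinuousOn_of_continuous hL.continuous.continuousOn) η hη
  refine ⟨min 1 δ, by positivity, fun x t ξ u Δ hξ hu hΔ => ?_⟩
  have hu1 := abs_le.mp (hu.trans (min_le_left _ _))
  have hΔ1 := abs_le.mp (hΔ.trans (min_le_left _ _))
  have hξ' := abs_le.mp hξ
  have hx := Int.fract_nonneg x; have hx' := Int.fract_lt_one x
  have ht := Int.fract_nonneg t; have ht' := Int.fract_lt_one t
  rw [hL.eq_fract_add, hL.eq_fract x t ξ]
  refine hδK (Int.fract x + u, Int.fract t, ξ + Δ) ?_ (Int.fract x, Int.fract t, ξ) ?_ ?_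
  · refine ⟨⟨?_, ?_⟩, ⟨?_, ?_⟩, ?_, ?_⟩ <;> linarith
  · refine ⟨⟨?_, ?_⟩, ⟨?_, ?_⟩, ?_, ?_⟩ <;> linarith
  · simp only [Prod.dist_eq, Real.dist_eq, add_sub_cancel_left, sub_self, abs_zero]
    exact max_le (hu.trans (min_le_right _ _)) (max_le hδ.le (hΔ.trans (min_le_right _ _)))

lemma intervalIntegrable_comp_lipschitz {γ : ℝ → ℝ} {L : NNReal} (hγ : LipschitzWith L γ)
    (a b : ℝ) : IntervalIntegrable (fun s => ℓ (γ s) s (deriv γ s)) volume a b := by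
  obtain ⟨M, hM⟩ := hL.exists_bound L
  refine (intervalIntegrable_const (c := M)).mono_fun ?_ (Eventually.of_forall fun s => ?_)
  · exact (hL.continuous.measurable.comp (hγ.continuous.measurable.prodMk
      (measurable_id.prodMk (measurable_deriv γ)))).aestronglyMeasurable
  · simpa using (hM _ _ _ (by simpa using norm_deriv_le_of_lipschitz hγ)).trans (le_abs_self M)

lemma reachable_of_lipschitz (h : ℝ) {γ : ℝ → ℝ} {L : NNReal} (hγ : LipschitzWith L γ)
    (a b : ℝ) :
    Reachable ℓ h a b (γ a) (γ b) ((∫ s in a..b, ℓ (γ s) s (deriv γ s)) + h * (b - a)) := by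
  refine ⟨deriv γ, (hγ.lipschitzOnWith (s := uIcc a b)).absolutelyContinuousOnInterval
    |>.intervalIntegrable_deriv, hγ.add_integral_deriv a b, ?_, ?_⟩ <;>
  simp only [hγ.add_integral_deriv a]
  · exact hL.intervalIntegrable_comp_lipschitz hγ a b
  · rfl

lemma exists_reachable_segment (h B : ℝ) :
    ∃ M, ∀ a b p p', a ≤ b → |p' - p| ≤ B * (b - a) → Reachable ℓ h a b p p' (M * (b - a)) := by
  obtain ⟨M, hM⟩ := hL.exists_bound |B|
  refine ⟨M + h, fun a b p p' hab hpp' => ?_⟩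
  set v := (p' - p) / (b - a)
  have hv : |v| ≤ |B| := by
    rcases hab.eq_or_lt with rfl | hab
    · simp [v]
    · rw [abs_div, abs_of_pos (sub_pos.mpr hab), div_le_iff₀ (sub_pos.mpr hab)]
      exact hpp'.trans (mul_le_mul_of_nonneg_right (le_abs_self B) (sub_pos.mpr hab).le)
  have hγ : LipschitzWith ‖v‖₊ fun s => p + (s - a) * v :=
    LipschitzWith.of_dist_le_mul fun s t => by
      simp only [Real.dist_eq, coe_nnnorm, Real.norm_eq_abs]
      rw [show p + (s - a) * v - (p + (t - a) * v) = (s - t) * v by ring, abs_mul, mul_comm]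
  have hend : p + (b - a) * v = p' := by
    rcases hab.eq_or_lt with rfl | hab
    · simpa [sub_eq_zero, eq_comm] using hpp'
    · simp only [v]; field_simp; ring
  have hr := hL.reachable_of_lipschitz h hγ a b
  simp only [sub_self, zero_mul, add_zero, hend] at hr
  refine hr.mono ?_
  have hbound : ∫ s in a..b, ℓ (p + (s - a) * v) s (deriv (fun s => p + (s - a) * v) s)
      ≤ ∫ _ in a..b, M :=
    integral_mono_on hab (hL.intervalIntegrable_comp_lipschitz hγ a b) intervalIntegrable_const
      fun s _ => (le_abs_self _).trans (hM _ _ _ (by simpa using hv))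
  rw [intervalIntegral.integral_const, smul_eq_mul] at hbound
  linarith

end IsPeriodicLagrangian

lemma exists_abs_sub_le_of_torusDist_le {v : ℝ → ℝ → ℝ}
    (hV : IsPeriodicLagrangian fun x t (_ : ℝ) => v x t) {η : ℝ} (hη : 0 < η) :
    ∃ δ > 0, ∀ (p w : ℝ) (t : ℤ), torusDist p w ≤ δ → |v p t - v w 0| ≤ η := by
  obtain ⟨δ, hδ, hδv⟩ := hV.exists_abs_sub_le 0 hη
  refine ⟨δ, hδ, fun p w t hpw => ?_⟩
  have hper : v p t = v (w + (p - w - round (p - w))) 0 := by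
    have := hV.add_int (w + (p - w - round (p - w))) 0 0 (round (p - w)) t
    rwa [show w + (p - w - round (p - w)) + round (p - w) = p by ring, zero_add] at this
  simpa [hper] using hδv w 0 0 (p - w - round (p - w)) 0 (by simp) hpw (by simpa using hδ.le)

def IsCalibratedOn (ℓ : ℝ → ℝ → ℝ → ℝ) (h : ℝ) (v : ℝ → ℝ → ℝ) (γ : ℝ → ℝ) (I : Set ℝ) :
    Prop :=
  ∀ a₁ ∈ I, ∀ a₂ ∈ I, a₁ ≤ a₂ →
    v (γ a₂) a₂ = (∫ s in a₁..a₂, ℓ (γ s) s (deriv γ s)) + h * (a₂ - a₁) + v (γ a₁) a₁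

namespace IsCalibratedOn

variable {ℓ : ℝ → ℝ → ℝ → ℝ} {h : ℝ} {v : ℝ → ℝ → ℝ} {γ : ℝ → ℝ} {I J : Set ℝ}

lemma mono (hγ : IsCalibratedOn ℓ h v γ J) (hIJ : I ⊆ J) : IsCalibratedOn ℓ h v γ I :=
  fun a₁ ha₁ a₂ ha₂ => hγ a₁ (hIJ ha₁) a₂ (hIJ ha₂)

lemma reachable (hL : IsPeriodicLagrangian ℓ) (hγ : IsCalibratedOn ℓ h v γ I) {L : NNReal}
    (hγL : LipschitzWith L γ) {a₁ a₂ : ℝ} (ha₁ : a₁ ∈ I) (ha₂ : a₂ ∈ I) (h12 : a₁ ≤ a₂) :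
    Reachable ℓ h a₁ a₂ (γ a₁) (γ a₂) (v (γ a₂) a₂ - v (γ a₁) a₁) :=
  (hL.reachable_of_lipschitz h hγL a₁ a₂).mono (by rw [hγ a₁ ha₁ a₂ ha₂ h12]; linarith)

lemma comp_min {c : ℝ} (hγ : IsCalibratedOn ℓ h v γ (Iic c)) :
    IsCalibratedOn ℓ h v (fun s => γ (min s c)) (Iic c) := by
  intro a₁ ha₁ a₂ ha₂ h12
  simp only [min_eq_left (mem_Iic.mp ha₁), min_eq_left (mem_Iic.mp ha₂)]
  rw [hγ a₁ ha₁ a₂ ha₂ h12]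
  congr 2
  refine integral_congr_ae ?_
  filter_upwards [compl_mem_ae_iff.mpr (measure_singleton c)] with s hsc hs
  have hs : s < c := lt_of_le_of_ne ((uIoc_of_le h12 ▸ hs).2.trans ha₂) hsc
  have heq : (fun s => γ (min s c)) =ᶠ[nhds s] γ := by
    filter_upwards [Iio_mem_nhds hs] with u hu using by rw [min_eq_left (le_of_lt hu)]
  rw [min_eq_left hs.le, heq.deriv_eq]

lemma shift (hL : IsPeriodicLagrangian ℓ) (hV : IsPeriodicLagrangian fun x t (_ : ℝ) => v x t)
    (hγ : IsCalibratedOn ℓ h v γ I) (m n : ℤ) :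
    IsCalibratedOn ℓ h v (fun s => γ (s - n) + m) ((fun s => s - n) ⁻¹' I) := by
  intro a₁ ha₁ a₂ ha₂ h12
  have hv : ∀ a, v (γ (a - n) + m) a = v (γ (a - n)) (a - n) := fun a => by
    simpa using hV.add_int (γ (a - n)) (a - n) 0 m n
  have hℓ : ∀ s, ℓ (γ (s - n) + m) s (deriv (fun s => γ (s - n) + m) s)
      = ℓ (γ (s - n)) (s - n) (deriv γ (s - n)) := fun s => by
    rw [deriv_add_const, deriv_comp_sub_const]
    simpa using hL.add_int (γ (s - n)) (s - n) (deriv γ (s - n)) m n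
  simp only [hv, hℓ]
  rw [integral_comp_sub_right (fun s => ℓ (γ s) s (deriv γ s)),
    hγ _ ha₁ _ ha₂ (by simpa using h12)]
  ring

end IsCalibratedOn

lemma IsPeriodicLagrangian.exists_reachable_of_isCalibratedOn {ℓ : ℝ → ℝ → ℝ → ℝ}
    (hL : IsPeriodicLagrangian ℓ) (h : ℝ) (v : ℝ → ℝ → ℝ) (L : NNReal) {η : ℝ} (hη : 0 < η) :
    ∃ δ > 0, ∀ (γ : ℝ → ℝ) (s₀ s₁ p : ℝ), LipschitzWith L γ →
      IsCalibratedOn ℓ h v γ (Icc s₀ s₁) → s₀ + 1 ≤ s₁ → |p - γ s₀| ≤ δ →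
      Reachable ℓ h s₀ s₁ p (γ s₁) (v (γ s₁) s₁ - v (γ s₀) s₀ + η) := by
  obtain ⟨δ, hδ, hδℓ⟩ := hL.exists_abs_sub_le L hη
  refine ⟨δ, hδ, fun γ s₀ s₁ p hγ hcal hs hp => ?_⟩
  have hs₀ : s₀ ∈ Icc s₀ s₁ := ⟨le_rfl, by linarith⟩
  have hs₀' : s₀ + 1 ∈ Icc s₀ s₁ := ⟨by linarith, hs⟩
  -- `g` runs from `p` to `γ (s₀ + 1)` and stays within `|p - γ s₀|` of `γ`, also in velocity
  set Δ := p - γ s₀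
  set g : ℝ → ℝ := fun s => γ s + (s₀ + 1 - s) * Δ
  have hg : LipschitzWith (L + ‖Δ‖₊) g := hγ.add <| LipschitzWith.of_dist_le_mul fun s t => by
    simp only [Real.dist_eq, coe_nnnorm, Real.norm_eq_abs]
    rw [show (s₀ + 1 - s) * Δ - (s₀ + 1 - t) * Δ = -((s - t) * Δ) by ring, abs_neg, abs_mul,
      mul_comm]
  have hpert : ∀ s ∈ Icc s₀ (s₀ + 1), ℓ (g s) s (deriv g s) ≤ ℓ (γ s) s (deriv γ s) + η := by
    intro s hs
    have hu : |(s₀ + 1 - s) * Δ| ≤ δ := by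
      rw [abs_mul, abs_of_nonneg (by linarith [hs.2])]
      nlinarith [hs.1, abs_nonneg Δ]
    have := hδℓ (γ s) s (deriv γ s) ((s₀ + 1 - s) * Δ) (deriv g s - deriv γ s)
      (by simpa using norm_deriv_le_of_lipschitz hγ) hu
      ((abs_deriv_add_affine_sub_deriv_le γ _ Δ s).trans hp)
    rw [add_sub_cancel] at this
    linarith [(abs_le.mp this).2]
  have r₁ : Reachable ℓ h s₀ (s₀ + 1) p (γ (s₀ + 1))
      (v (γ (s₀ + 1)) (s₀ + 1) - v (γ s₀) s₀ + η) := by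
    have hr := hL.reachable_of_lipschitz h hg s₀ (s₀ + 1)
    simp only [g, Δ, sub_self, zero_mul, add_zero, add_sub_cancel_left, one_mul,
      add_sub_cancel] at hr
    refine hr.mono ?_
    have hmono := integral_mono_on (by linarith) (hL.intervalIntegrable_comp_lipschitz hg _ _)
      ((hL.intervalIntegrable_comp_lipschitz hγ _ _).add intervalIntegrable_const) hpert
    rw [integral_add (hL.intervalIntegrable_comp_lipschitz hγ _ _) intervalIntegrable_const,
      intervalIntegral.integral_const, smul_eq_mul] at hmono
    have hcal₀ := hcal s₀ hs₀ (s₀ + 1) hs₀' (by linarith)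
    simp only [g] at hmono
    linarith
  exact (r₁.trans (by linarith) hs (hcal.reachable hL hγ hs₀' ⟨by linarith, le_rfl⟩ hs)).mono
    (by linarith)

def ReachableFromNear (ℓ : ℝ → ℝ → ℝ → ℝ) (h δ y τ w C : ℝ) : Prop :=
  ∀ (N : ℤ) (p : ℝ), torusDist p w ≤ δ → ∃ t m : ℤ, t ≤ N ∧ Reachable ℓ h t τ (p + m) y C

lemma ReachableFromNear.mono {ℓ : ℝ → ℝ → ℝ → ℝ} {h δ y τ w C₁ C₂ : ℝ}
    (hR : ReachableFromNear ℓ h δ y τ w C₁) (hC : C₁ ≤ C₂) : ReachableFromNear ℓ h δ y τ w C₂ :=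
  fun N p hp => let ⟨t, m, ht, hr⟩ := hR N p hp; ⟨t, m, ht, hr.mono hC⟩

section Chain

variable {ℓ : ℝ → ℝ → ℝ → ℝ} {h : ℝ} {v : ℝ → ℝ → ℝ} {L : NNReal} {η δ : ℝ}
  (hlink : ∀ (γ : ℝ → ℝ) (s₀ s₁ p : ℝ), LipschitzWith L γ →
    IsCalibratedOn ℓ h v γ (Icc s₀ s₁) → s₀ + 1 ≤ s₁ → |p - γ s₀| ≤ 2 * δ →
    Reachable ℓ h s₀ s₁ p (γ s₁) (v (γ s₁) s₁ - v (γ s₀) s₀ + η))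
  (hclose : ∀ (p w : ℝ) (t : ℤ), torusDist p w ≤ δ → |v p t - v w 0| ≤ η)
include hlink hclose

lemma reachableFromNear_of_isCalibratedOn_Iic {γ : ℝ → ℝ} {τ w : ℝ}
    (hγL : LipschitzOnWith L γ (Iic τ)) (hγ : IsCalibratedOn ℓ h v γ (Iic τ))
    (hw : ∃ᶠ t : ℤ in atBot, torusDist (γ t) w ≤ δ) :
    ReachableFromNear ℓ h δ (γ τ) τ w (v (γ τ) τ - v w 0 + 2 * η) := by
  intro N p hp
  obtain ⟨t, ht, hγt⟩ := frequently_atBot.mp hw (min N (⌊τ⌋ - 1))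
  have htτ : (t : ℝ) + 1 ≤ τ := by
    have : ((t + 1 : ℤ) : ℝ) ≤ ⌊τ⌋ := by exact_mod_cast (show t + 1 ≤ ⌊τ⌋ by omega)
    push_cast at this
    linarith [Int.floor_le τ]
  obtain ⟨m, hm⟩ := exists_int_abs_add_sub_le_of_torusDist_le hp hγt
  have hr := hlink (fun s => γ (min s τ)) t τ (p + m) hγL.comp_min_Iic
    (hγ.comp_min.mono Icc_subset_Iic_self) htτ
    (by rw [min_eq_left (by linarith)]; linarith)
  simp only [min_self, min_eq_left (show (t : ℝ) ≤ τ by linarith)] at hr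
  refine ⟨t, m, ht.trans (min_le_left _ _), hr.mono ?_⟩
  linarith [(abs_le.mp (hclose (γ t) w t hγt)).1]

lemma ReachableFromNear.of_isCalibratedOn (hL : IsPeriodicLagrangian ℓ)
    (hV : IsPeriodicLagrangian fun x t (_ : ℝ) => v x t) {γ : ℝ → ℝ} {y τ w x C : ℝ}
    (hR : ReachableFromNear ℓ h δ y τ x C) (hγL : LipschitzWith L γ)
    (hγ : IsCalibratedOn ℓ h v γ univ) (hw : ∃ᶠ t : ℤ in atBot, torusDist (γ t) w ≤ δ)
    (hx : ∃ᶠ t : ℤ in atTop, torusDist (γ t) x ≤ δ) :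
    ReachableFromNear ℓ h δ y τ w (C + v x 0 - v w 0 + 3 * η) := by
  intro N p hp
  obtain ⟨tp, htp⟩ := hx.exists
  obtain ⟨t', m', ht', hr'⟩ := hR (min N ⌊τ⌋) (γ tp) htp
  obtain ⟨tm, htm, hγtm⟩ := frequently_atBot.mp hw (tp - 1)
  obtain ⟨m, hm⟩ := exists_int_abs_add_sub_le_of_torusDist_le hp hγtm
  -- translate the piece of `γ` on `[tm, tp]` so that it ends where the later chain starts
  set n := t' - tp
  set γ' : ℝ → ℝ := fun s => γ (s - n) + m'
  have hγ'L : LipschitzWith L γ' := LipschitzWith.of_dist_le_mul fun s t => by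
    simpa [γ', Real.dist_eq] using hγL.dist_le_mul (s - n) (t - n)
  have hγ'tm : γ' (tm + n : ℤ) = γ tm + m' := by simp [γ']
  have hγ't' : γ' t' = γ tp + m' := by simp [γ', n]
  have hr := hlink γ' (tm + n : ℤ) t' (p + m + m') hγ'L
    ((by simpa using hγ.shift hL hV m' n : IsCalibratedOn ℓ h v γ' univ).mono (subset_univ _))
    (by exact_mod_cast (show tm + n + 1 ≤ t' by omega))
    (by rw [hγ'tm]; ring_nf; linarith)
  rw [hγ'tm, hγ't'] at hr
  have htτ : (t' : ℝ) ≤ τ := (Int.cast_le.mpr (ht'.trans (min_le_right _ _))).trans (Int.floor_le τ)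
  refine ⟨tm + n, m + m', by omega, ?_⟩
  have hcat := hr.trans (Int.cast_le.mpr (by omega)) htτ hr'
  push_cast at hcat ⊢
  rw [← add_assoc]
  refine hcat.mono ?_
  have h₁ := hclose (γ tp + m') x t' (by rwa [torusDist_add_int])
  have h₂ := hclose (γ tm + m') w (tm + n) (by rwa [torusDist_add_int])
  push_cast at h₂
  linarith [(abs_le.mp h₁).2, (abs_le.mp h₂).1]

lemma reachableFromNear_of_heteroclinic_chain (hL : IsPeriodicLagrangian ℓ)
    (hV : IsPeriodicLagrangian fun x t (_ : ℝ) => v x t) (hη : 0 ≤ η) {k : ℕ} (hk : 1 ≤ k)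
    {γ₀ : ℝ → ℝ} {γs : ℕ → ℝ → ℝ} {x : ℕ → ℝ} {τ z : ℝ}
    (hγ₀L : LipschitzOnWith L γ₀ (Iic τ)) (hγ₀ : IsCalibratedOn ℓ h v γ₀ (Iic τ))
    (hγsL : ∀ j, 1 ≤ j → j ≤ k → LipschitzWith L (γs j))
    (hγs : ∀ j, 1 ≤ j → j ≤ k → IsCalibratedOn ℓ h v (γs j) univ)
    (h₀ : ∃ᶠ t : ℤ in atBot, torusDist (γ₀ t) (x 1) ≤ δ)
    (hmid : ∀ j, 1 ≤ j → j + 1 ≤ k →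
      (∃ᶠ t : ℤ in atBot, torusDist (γs j t) (x (j + 1)) ≤ δ) ∧
        ∃ᶠ t : ℤ in atTop, torusDist (γs j t) (x j) ≤ δ)
    (hlast : (∃ᶠ t : ℤ in atBot, torusDist (γs k t) z ≤ δ) ∧
      ∃ᶠ t : ℤ in atTop, torusDist (γs k t) (x k) ≤ δ) :
    ReachableFromNear ℓ h δ (γ₀ τ) τ z (v (γ₀ τ) τ - v z 0 + 3 * (k + 1) * η) := by
  have hchain : ∀ j, 1 ≤ j → j ≤ k →
      ReachableFromNear ℓ h δ (γ₀ τ) τ (x j) (v (γ₀ τ) τ - v (x j) 0 + 3 * j * η) := by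
    intro j hj
    induction j, hj using Nat.le_induction with
    | base =>
      intro _
      refine (reachableFromNear_of_isCalibratedOn_Iic hlink hclose hγ₀L hγ₀ h₀).mono ?_
      push_cast
      linarith
    | succ j hj ih =>
      intro hjk
      refine ((ih (by omega)).of_isCalibratedOn hlink hclose hL hV (hγsL j hj (by omega))
        (hγs j hj (by omega)) (hmid j hj hjk).1 (hmid j hj hjk).2).mono ?_
      push_cast
      linarith
  refine ((hchain k hk le_rfl).of_isCalibratedOn hlink hclose hL hV (hγsL k hk le_rfl)
    (hγs k hk le_rfl) hlast.1 hlast.2).mono ?_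
  linarith

end Chain

lemma frequently_torusDist_le_of_tendsto {γ : ℝ → ℝ} {w : ℝ} {l l' : Filter ℤ} [l.NeBot]
    {g : ℤ → ℤ} (hg : Tendsto g l l') (hγ : Tendsto (fun a => torusDist (γ (g a)) w) l (𝓝 0))
    {δ : ℝ} (hδ : 0 < δ) : ∃ᶠ t : ℤ in l', torusDist (γ t) w ≤ δ :=
  hg.frequently (hγ.eventually (ge_mem_nhds hδ)).frequently

lemma exists_reachable_of_heteroclinic_chain {ℓ : ℝ → ℝ → ℝ → ℝ} {h : ℝ} {v : ℝ → ℝ → ℝ}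
    (hL : IsPeriodicLagrangian ℓ) (hV : IsPeriodicLagrangian fun x t (_ : ℝ) => v x t)
    {q : ℕ} (hq : 0 < q) (b : ℤ) {k : ℕ} (hk : 1 ≤ k) {L : NNReal}
    {γ₀ : ℝ → ℝ} {γs : ℕ → ℝ → ℝ} {x : ℕ → ℝ} {τ z : ℝ}
    (hγ₀L : LipschitzOnWith L γ₀ (Iic τ)) (hγ₀ : IsCalibratedOn ℓ h v γ₀ (Iic τ))
    (hγsL : ∀ j, 1 ≤ j → j ≤ k → LipschitzWith L (γs j))
    (hγs : ∀ j, 1 ≤ j → j ≤ k → IsCalibratedOn ℓ h v (γs j) univ)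
    (hlim₀ : Tendsto (fun a : ℤ => torusDist (γ₀ (a * q)) (x 1)) atBot (𝓝 0))
    (hlimmid : ∀ j : ℕ, 1 ≤ j → j + 1 ≤ k →
      Tendsto (fun a : ℤ => torusDist (γs j (a * q)) (x (j + 1))) atBot (𝓝 0) ∧
      Tendsto (fun a : ℤ => torusDist (γs j (a * q)) (x j)) atTop (𝓝 0))
    (hlimk : Tendsto (fun a : ℤ => torusDist (γs k (a * q + b)) z) atBot (𝓝 0) ∧
      Tendsto (fun a : ℤ => torusDist (γs k (a * q)) (x k)) atTop (𝓝 0))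
    {ε : ℝ} (hε : 0 < ε) (N : ℤ) :
    ∃ t m : ℤ, t ≤ N ∧ Reachable ℓ h t τ (z + m) (γ₀ τ) (v (γ₀ τ) τ - v z 0 + ε) := by
  have hη : 0 < ε / (3 * (k + 1)) := by positivity
  obtain ⟨δℓ, hδℓ, hlink⟩ := hL.exists_reachable_of_isCalibratedOn h v L hη
  obtain ⟨δv, hδv, hclose⟩ := exists_abs_sub_le_of_torusDist_le hV hη
  set δ := min (δℓ / 2) δv
  have hδ : 0 < δ := by positivity
  have hq' : (0 : ℤ) < q := by exact_mod_cast hq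
  have hbot : Tendsto (fun a : ℤ => a * (q : ℤ)) atBot atBot := tendsto_id.atBot_mul_const' hq'
  have htop : Tendsto (fun a : ℤ => a * (q : ℤ)) atTop atTop := tendsto_id.atTop_mul_const' hq'
  have hbot' : Tendsto (fun a : ℤ => a * (q : ℤ) + b) atBot atBot :=
    tendsto_atBot_add_const_right _ b hbot
  have hR := reachableFromNear_of_heteroclinic_chain (δ := δ)
    (fun γ s₀ s₁ p h₁ h₂ h₃ h₄ => hlink γ s₀ s₁ p h₁ h₂ h₃
      (h₄.trans (by linarith [min_le_left (δℓ / 2) δv])))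
    (fun p w t hpw => hclose p w t (hpw.trans (min_le_right _ _)))
    hL hV hη.le hk hγ₀L hγ₀ hγsL hγs
    (frequently_torusDist_le_of_tendsto hbot (by simpa using hlim₀) hδ)
    (fun j hj hjk =>
      ⟨frequently_torusDist_le_of_tendsto hbot (by simpa using (hlimmid j hj hjk).1) hδ,
        frequently_torusDist_le_of_tendsto htop (by simpa using (hlimmid j hj hjk).2) hδ⟩)
    ⟨frequently_torusDist_le_of_tendsto hbot' (by simpa using hlimk.1) hδ,
      frequently_torusDist_le_of_tendsto htop (by simpa using hlimk.2) hδ⟩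
  obtain ⟨t, m, ht, hr⟩ := hR N z (by simp [torusDist, hδ.le])
  refine ⟨t, m, ht, hr.mono (le_of_eq ?_)⟩
  field_simp

def laxOleinikSet (ℓ : ℝ → ℝ → ℝ → ℝ) (v : ℝ → ℝ → ℝ) (x t τ' : ℝ) : Set ℝ :=
  {A : ℝ | ∃ (z : ℝ) (ρ : ℝ → ℝ),
    IntervalIntegrable ρ volume τ' t ∧
    z + (∫ s in τ'..t, ρ s) = x ∧
    IntervalIntegrable (fun s => ℓ (z + ∫ u in τ'..s, ρ u) s (ρ s)) volume τ' t ∧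
    A = (∫ s in τ'..t, ℓ (z + ∫ u in τ'..s, ρ u) s (ρ s)) + v z τ'}

def peierlsSet (ℓ : ℝ → ℝ → ℝ → ℝ) (h z y τ : ℝ) (T : ℕ) : Set ℝ :=
  {A : ℝ | ∃ (z' : ℝ) (ρ : ℝ → ℝ),
    IntervalIntegrable ρ volume (-(T : ℝ)) τ ∧
    (∃ j : ℤ, z' = z + (j : ℝ)) ∧
    z' + (∫ s in (-(T : ℝ))..τ, ρ s) = y ∧
    IntervalIntegrable
      (fun s => ℓ (z' + ∫ u in (-(T : ℝ))..s, ρ u) s (ρ s) + h) volume (-(T : ℝ)) τ ∧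
    A = ∫ s in (-(T : ℝ))..τ, (ℓ (z' + ∫ u in (-(T : ℝ))..s, ρ u) s (ρ s) + h)}

def ReachableArbitrarilyCheaply (ℓ : ℝ → ℝ → ℝ → ℝ) (h τ₁ τ₂ x : ℝ) : Prop :=
  ∀ r, ∃ p, Reachable ℓ h τ₁ τ₂ p x r

section LaxOleinik

variable {ℓ : ℝ → ℝ → ℝ → ℝ} {h : ℝ} {v : ℝ → ℝ → ℝ}

lemma Reachable.exists_mem_laxOleinikSet {τ' t p x C : ℝ} (hr : Reachable ℓ h τ' t p x C) :
    ∃ A ∈ laxOleinikSet ℓ v x t τ', A ≤ C - h * (t - τ') + v p τ' :=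
  let ⟨ρ, hρ, hp, hi, hc⟩ := hr
  ⟨_, ⟨p, ρ, hρ, hp, hi, rfl⟩, by linarith⟩

lemma not_bddBelow_laxOleinikSet_iff {M : ℝ} (hv : ∀ x t, |v x t| ≤ M) {x t τ' : ℝ} :
    ¬BddBelow (laxOleinikSet ℓ v x t τ') ↔ ReachableArbitrarilyCheaply ℓ h τ' t x := by
  rw [not_bddBelow_iff]
  constructor
  · intro hunb r
    obtain ⟨_, ⟨p, ρ, hρ, hp, hi, rfl⟩, hlt⟩ := hunb (r - M - h * (t - τ'))
    exact ⟨p, ρ, hρ, hp, hi, by linarith [(abs_le.mp (hv p τ')).1]⟩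
  · intro hcheap r
    obtain ⟨p, hp⟩ := hcheap (r - 1 + h * (t - τ') - M)
    obtain ⟨A, hA, hAle⟩ := hp.exists_mem_laxOleinikSet (v := v)
    exact ⟨A, hA, by linarith [(abs_le.mp (hv p τ')).2]⟩

lemma Reachable.exists_mem_peierlsSet {z y τ C : ℝ} {T : ℕ} {j : ℤ}
    (hr : Reachable ℓ h (-T) τ (z + j) y C) : ∃ A ∈ peierlsSet ℓ h z y τ T, A ≤ C := by
  obtain ⟨ρ, hρ, hp, hi, hc⟩ := hr
  refine ⟨_, ⟨z + j, ρ, hρ, ⟨j, rfl⟩, hp, hi.add intervalIntegrable_const, rfl⟩, ?_⟩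
  rw [integral_add hi intervalIntegrable_const, intervalIntegral.integral_const, smul_eq_mul]
  linarith

lemma exists_reachable_of_mem_peierlsSet {z y τ A : ℝ} {T : ℕ}
    (hA : A ∈ peierlsSet ℓ h z y τ T) : ∃ j : ℤ, Reachable ℓ h (-T) τ (z + j) y A := by
  obtain ⟨_, ρ, hρ, ⟨j, rfl⟩, hp, hi, rfl⟩ := hA
  have hi' := hi.sub (intervalIntegrable_const (c := h))
  simp only [add_sub_cancel_right] at hi'
  refine ⟨j, ρ, hρ, hp, hi', ?_⟩
  rw [integral_add hi' intervalIntegrable_const, intervalIntegral.integral_const, smul_eq_mul]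
  linarith

lemma le_of_mem_peierlsSet (hV : IsPeriodicLagrangian fun x t (_ : ℝ) => v x t)
    {z y τ A : ℝ} {T : ℕ}
    (hLO : v y τ = sInf (laxOleinikSet ℓ v y τ (-T)) + h * (τ - -T))
    (hbdd : BddBelow (laxOleinikSet ℓ v y τ (-T))) (hA : A ∈ peierlsSet ℓ h z y τ T) :
    v y τ - v z 0 ≤ A := by
  obtain ⟨j, hr⟩ := exists_reachable_of_mem_peierlsSet hA
  obtain ⟨A', hA', hA'le⟩ := hr.exists_mem_laxOleinikSet (v := v)
  have hvz : v (z + j) (-T) = v z 0 := by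
    simpa using hV.add_int z 0 0 j (-T)
  linarith [csInf_le hbdd hA']

lemma frequently_exists_mem_peierlsSet_le {z y τ C : ℝ}
    (hR : ∀ N : ℤ, ∃ t m : ℤ, t ≤ N ∧ Reachable ℓ h t τ (z + m) y C) :
    ∃ᶠ T : ℕ in atTop, ∃ A ∈ peierlsSet ℓ h z y τ T, A ≤ C := by
  refine frequently_atTop.mpr fun N => ?_
  obtain ⟨t, m, ht, hr⟩ := hR (-N)
  have hT : (((-t).toNat : ℕ) : ℝ) = -t := by exact_mod_cast Int.toNat_of_nonneg (by omega)
  exact ⟨(-t).toNat, by omega, Reachable.exists_mem_peierlsSet (by rwa [hT, neg_neg])⟩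

end LaxOleinik

lemma liminf_sInf_le_of_frequently {S : ℕ → Set ℝ} {c : ℝ}
    (hlow : ∀ᶠ T in atTop, ∀ A ∈ S T, c ≤ A)
    (hup : ∀ ε > 0, ∃ᶠ T in atTop, ∃ A ∈ S T, A ≤ c + ε) :
    liminf (fun T => sInf (S T)) atTop ≤ c := by
  refine le_of_forall_pos_le_add fun ε hε => liminf_le_of_frequently_le ?_ ?_
  · exact (hup ε hε).mp (hlow.mono fun T hT ⟨A, hA, hAc⟩ => (csInf_le ⟨c, hT⟩ hA).trans hAc)
  · refine ⟨min c 0, eventually_map.mpr (hlow.mono fun T hT => ?_)⟩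
    rcases (S T).eq_empty_or_nonempty with hS | hS
    · simp [hS]
    · exact le_csInf hS fun A hA => (min_le_left c 0).trans (hT A hA)

namespace ReachableArbitrarilyCheaply

variable {ℓ : ℝ → ℝ → ℝ → ℝ} {h τ₀ τ₁ τ₂ τ₃ x : ℝ}

lemma prepend (hc : ReachableArbitrarilyCheaply ℓ h τ₁ τ₂ x) (hL : IsPeriodicLagrangian ℓ)
    (h01 : τ₀ + 1 ≤ τ₁) (h12 : τ₁ ≤ τ₂) (p₀ r : ℝ) :
    ∃ j : ℤ, Reachable ℓ h τ₀ τ₂ (p₀ + j) x r := by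
  obtain ⟨M, hM⟩ := hL.exists_reachable_segment h 1
  obtain ⟨p, hp⟩ := hc (r - M * (τ₁ - τ₀))
  have hjump : |p - (p₀ + ⌊p - p₀⌋)| ≤ 1 * (τ₁ - τ₀) := by
    rw [show p - (p₀ + ⌊p - p₀⌋) = Int.fract (p - p₀) by rw [Int.fract]; ring,
      abs_of_nonneg (Int.fract_nonneg _)]
    linarith [Int.fract_lt_one (p - p₀)]
  exact ⟨⌊p - p₀⌋,
    ((hM τ₀ τ₁ _ p (by linarith) hjump).trans (by linarith) h12 hp).mono (by linarith)⟩

lemma append (hc : ReachableArbitrarilyCheaply ℓ h τ₁ τ₂ x) (hL : IsPeriodicLagrangian ℓ)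
    (h12 : τ₁ ≤ τ₂) (h23 : τ₂ < τ₃) (x' : ℝ) : ReachableArbitrarilyCheaply ℓ h τ₁ τ₃ x' := by
  obtain ⟨M, hM⟩ := hL.exists_reachable_segment h (|x' - x| / (τ₃ - τ₂))
  intro r
  obtain ⟨p, hp⟩ := hc (r - M * (τ₃ - τ₂))
  refine ⟨p, (hp.trans h12 h23.le (hM τ₂ τ₃ x x' h23.le ?_)).mono (by linarith)⟩
  rw [div_mul_cancel₀ _ (sub_ne_zero.mpr h23.ne')]

lemma eq_of_laxOleinik {v : ℝ → ℝ → ℝ} {M : ℝ} (hv : ∀ x t, |v x t| ≤ M)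
    (hc : ReachableArbitrarilyCheaply ℓ h τ₁ τ₂ x)
    (hLO : v x τ₂ = sInf (laxOleinikSet ℓ v x τ₂ τ₁) + h * (τ₂ - τ₁)) :
    v x τ₂ = h * (τ₂ - τ₁) := by
  rwa [Real.sInf_of_not_bddBelow ((not_bddBelow_laxOleinikSet_iff hv).mpr hc), zero_add] at hLO

end ReachableArbitrarilyCheaply

/-- If some Lax–Oleinik set is unbounded below, the infima involved take the junk value `0`. Then
the Peierls liminf is `0`, while the Lax–Oleinik identity forces `h = 0` and `v = 0` at both
`(y, τ)` and `(z, 0)`. -/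
lemma liminf_sInf_peierlsSet_le_of_not_bddBelow {ℓ : ℝ → ℝ → ℝ → ℝ} {h : ℝ} {v : ℝ → ℝ → ℝ}
    (hL : IsPeriodicLagrangian ℓ) (hV : IsPeriodicLagrangian fun x t (_ : ℝ) => v x t)
    (hLO : ∀ x t τ' : ℝ, τ' < t → v x t = sInf (laxOleinikSet ℓ v x t τ') + h * (t - τ'))
    {y τ z : ℝ} {T₀ : ℕ} (hT₀ : -(T₀ : ℝ) < τ)
    (hunb : ¬BddBelow (laxOleinikSet ℓ v y τ (-T₀))) :
    liminf (fun T : ℕ => sInf (peierlsSet ℓ h z y τ T)) atTop ≤ v y τ - v z 0 := by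
  obtain ⟨M, hM⟩ := hV.exists_bound 0
  have hv : ∀ x t, |v x t| ≤ M := fun x t => hM x t 0 (by simp)
  have hc : ReachableArbitrarilyCheaply ℓ h (-T₀) τ y := (not_bddBelow_laxOleinikSet_iff hv).mp hunb
  have hS : ∀ᶠ T : ℕ in atTop, sInf (peierlsSet ℓ h z y τ T) = 0 := by
    filter_upwards [eventually_ge_atTop (T₀ + 1)] with T hT
    have hT' : -(T : ℝ) + 1 ≤ -T₀ := by
      have : ((T₀ + 1 : ℕ) : ℝ) ≤ T := by exact_mod_cast hT
      push_cast at this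
      linarith
    refine Real.sInf_of_not_bddBelow (not_bddBelow_iff.mpr fun r => ?_)
    obtain ⟨j, hj⟩ := hc.prepend hL hT' hT₀.le z (r - 1)
    obtain ⟨A, hA, hAr⟩ := hj.exists_mem_peierlsSet
    exact ⟨A, hA, by linarith⟩
  have hvy := hc.eq_of_laxOleinik hv (hLO y τ _ hT₀)
  have hvy' := ReachableArbitrarilyCheaply.eq_of_laxOleinik hv
    (fun r => let ⟨_, hj⟩ := hc.prepend hL (by linarith) hT₀.le 0 r; ⟨_, hj⟩)
    (hLO y τ (-T₀ - 1) (by linarith))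
  have hh : h = 0 := by linarith
  have hτ : τ < (⌊τ⌋ + 1 : ℤ) := by push_cast; exact Int.lt_floor_add_one τ
  have hvz := (hc.append hL hT₀.le hτ z).eq_of_laxOleinik hv (hLO z _ (-T₀) (by linarith))
  have hvz₀ : v z (⌊τ⌋ + 1 : ℤ) = v z 0 := by simpa using hV.add_int z 0 0 0 (⌊τ⌋ + 1)
  rw [liminf_congr hS, liminf_const, hvy, ← hvz₀, hvz, hh]
  simp

/-- second half of Proposition 4.1: a calibrated heteroclinic
chain connecting `y` (at time `τ`) through `x₁, …, x_k` to `z` forces the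
reverse Peierls-barrier inequality `h_p(z,0;y,τ) ≤ v̄(y,τ) − v̄(z,0)`. -/
theorem statement12
    (ℓ : ℝ → ℝ → ℝ → ℝ)
    (hℓ : Continuous fun q : ℝ × ℝ × ℝ => ℓ q.1 q.2.1 q.2.2)
    (hℓper : ∀ x t ξ : ℝ, ℓ (x + 1) t ξ = ℓ x t ξ ∧ ℓ x (t + 1) ξ = ℓ x t ξ)
    (h : ℝ) (vbar : ℝ → ℝ → ℝ)
    (hcont : Continuous fun p : ℝ × ℝ => vbar p.1 p.2)
    (hper : ∀ x t : ℝ, vbar (x + 1) t = vbar x t ∧ vbar x (t + 1) = vbar x t)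
    -- the backward Lax–Oleinik variational property
    (hLO : ∀ x t τ' : ℝ, τ' < t →
      vbar x t = sInf {A : ℝ | ∃ (z : ℝ) (ρ : ℝ → ℝ),
          IntervalIntegrable ρ volume τ' t ∧
          z + (∫ s in τ'..t, ρ s) = x ∧
          IntervalIntegrable (fun s => ℓ (z + ∫ u in τ'..s, ρ u) s (ρ s)) volume τ' t ∧
          A = (∫ s in τ'..t, ℓ (z + ∫ u in τ'..s, ρ u) s (ρ s)) + vbar z τ'}
        + h * (t - τ'))
    (q : ℕ) (b : ℤ) (hb : b.natAbs < q)
    (y τ z : ℝ) (k : ℕ) (hk : 1 ≤ k) (x : ℕ → ℝ)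
    (Lc : NNReal)
    (γ₀ : ℝ → ℝ) (γs : ℕ → ℝ → ℝ)
    (hγ₀Lip : LipschitzOnWith Lc γ₀ (Set.Iic τ))
    (hγsLip : ∀ j : ℕ, 1 ≤ j → j ≤ k → LipschitzWith Lc (γs j))
    (hγ₀τ : γ₀ τ = y)
    -- the curves are calibrated for v̄
    (hcal₀ : ∀ a₁ a₂ : ℝ, a₁ ≤ a₂ → a₂ ≤ τ →
      vbar (γ₀ a₂) a₂
        = (∫ s in a₁..a₂, ℓ (γ₀ s) s (deriv γ₀ s)) + h * (a₂ - a₁) + vbar (γ₀ a₁) a₁)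
    (hcals : ∀ j : ℕ, 1 ≤ j → j ≤ k → ∀ a₁ a₂ : ℝ, a₁ ≤ a₂ →
      vbar (γs j a₂) a₂
        = (∫ s in a₁..a₂, ℓ (γs j s) s (deriv (γs j) s)) + h * (a₂ - a₁)
          + vbar (γs j a₁) a₁)
    -- the heteroclinic asymptotics
    (hlim₀ : Filter.Tendsto (fun a : ℤ => torusDist (γ₀ ((a : ℝ) * (q : ℝ))) (x 1))
      Filter.atBot (nhds 0))
    (hlimmid : ∀ j : ℕ, 1 ≤ j → j + 1 ≤ k →
      Filter.Tendsto (fun a : ℤ => torusDist (γs j ((a : ℝ) * (q : ℝ))) (x (j + 1)))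
        Filter.atBot (nhds 0) ∧
      Filter.Tendsto (fun a : ℤ => torusDist (γs j ((a : ℝ) * (q : ℝ))) (x j))
        Filter.atTop (nhds 0))
    (hlimk : Filter.Tendsto (fun a : ℤ => torusDist (γs k ((a : ℝ) * (q : ℝ) + (b : ℝ))) z)
        Filter.atBot (nhds 0) ∧
      Filter.Tendsto (fun a : ℤ => torusDist (γs k ((a : ℝ) * (q : ℝ))) (x k))
        Filter.atTop (nhds 0)) :
    Filter.liminf (fun T : ℕ => sInf {A : ℝ | ∃ (z' : ℝ) (ρ : ℝ → ℝ),
        IntervalIntegrable ρ volume (-(T : ℝ)) τ ∧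
        (∃ j : ℤ, z' = z + (j : ℝ)) ∧
        z' + (∫ s in (-(T : ℝ))..τ, ρ s) = y ∧
        IntervalIntegrable
          (fun s => ℓ (z' + ∫ u in (-(T : ℝ))..s, ρ u) s (ρ s) + h) volume (-(T : ℝ)) τ ∧
        A = ∫ s in (-(T : ℝ))..τ, (ℓ (z' + ∫ u in (-(T : ℝ))..s, ρ u) s (ρ s) + h)})
      Filter.atTop ≤ vbar y τ - vbar z 0 := by
  have hL : IsPeriodicLagrangian ℓ := ⟨hℓ, hℓper⟩
  have hV : IsPeriodicLagrangian fun x t (_ : ℝ) => vbar x t :=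
    ⟨hcont.comp (continuous_fst.prodMk continuous_snd.fst), fun x t _ => hper x t⟩
  change liminf (fun T : ℕ => sInf (peierlsSet ℓ h z y τ T)) atTop ≤ _
  by_cases hbdd : ∀ T : ℕ, -(T : ℝ) < τ → BddBelow (laxOleinikSet ℓ vbar y τ (-T))
  · refine liminf_sInf_le_of_frequently ?_ fun ε hε => frequently_exists_mem_peierlsSet_le ?_
    · filter_upwards [eventually_gt_atTop ⌈-τ⌉₊] with T hT A hA
      have hTτ : -(T : ℝ) < τ := by linarith [Nat.lt_of_ceil_lt hT]
      exact le_of_mem_peierlsSet hV (hLO y τ _ hTτ) (hbdd T hTτ) hA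
    · rw [← hγ₀τ]
      exact exists_reachable_of_heteroclinic_chain hL hV (b.natAbs.zero_le.trans_lt hb) b hk
        hγ₀Lip (fun a₁ _ a₂ ha₂ h12 => hcal₀ a₁ a₂ h12 ha₂) hγsLip
        (fun j hj hjk a₁ _ a₂ _ h12 => hcals j hj hjk a₁ a₂ h12) hlim₀ hlimmid hlimk hε
  · obtain ⟨T₀, hT₀, hunb⟩ := not_forall₂.mp hbdd
    exact liminf_sInf_peierlsSet_le_of_not_bddBelow hL hV hLO hT₀ hunb
end
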